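/- arXiv:2509.09401 — 7 statements merged into one kernel-verified Lean document; each statement's English description precedes it below -/
import Mathlib

section
/- Let a₁, a₂ ≥ 1 be integers such that n = a₁ + a₂ is odd (so n ≥ 3). Then there exist positive rational numbers ρ₀, ρ₂, …, ρ_{n−3} (indexed by the even integers 2i with 0 ≤ 2i ≤ n−3) such that ∫_0^∞ ℓ · V_{a₁}(ℓ) · V_{a₂}(ℓ) dℓ = ∑_{i=0}^{(n−3)/2} ρ_{2i} · π^{2i} · ζ(n−2i), where ζ(m) denotes ∑_{k=1}^{∞} 1/k^m. -/
open MeasureTheory Real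

/-- The Mirzakhani volume `V_{𝔸ₙ}(ℓ)` of the moduli space of hyperbolic `n`-crowns with
neck length `ℓ`. -/
noncomputable def crownVol (n : ℕ) (d : ℝ) : ℝ :=
  if n % 2 = 0 then
    d / Real.sinh (d / 2) *
      (∏ j ∈ Finset.Icc 1 (n / 2 - 1), (d ^ 2 + (2 * (j : ℝ)) ^ 2 * Real.pi ^ 2)) /
      (2 * (Nat.factorial (n - 1) : ℝ))
  else
    1 / Real.cosh (d / 2) *
      (∏ j ∈ Finset.Icc 1 (n / 2), (d ^ 2 + (2 * (j : ℝ) - 1) ^ 2 * Real.pi ^ 2)) /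
      (2 * (Nat.factorial (n - 1) : ℝ))

lemma one_div_sinh_eq {x : ℝ} (hx : 0 < x) :
    1 / Real.sinh x = ∑' k : ℕ, 2 * Real.exp (-((2 * (k:ℝ) + 1) * x)) := by
  have h2 : Real.exp (-(2 * x)) < 1 := by
    rw [Real.exp_lt_one_iff]; linarith
  have h0 : (0:ℝ) ≤ Real.exp (-(2 * x)) := (Real.exp_pos _).le
  have hgeom := tsum_geometric_of_lt_one h0 h2
  have key : ∀ k : ℕ, 2 * Real.exp (-((2 * (k:ℝ) + 1) * x))
      = (2 * Real.exp (-x)) * Real.exp (-(2 * x)) ^ k := by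
    intro k
    rw [← Real.exp_nat_mul, mul_assoc, ← Real.exp_add]
    congr 1
    ring
  rw [tsum_congr key, tsum_mul_left, hgeom]
  have hs : Real.sinh x > 0 := Real.sinh_pos_iff.2 hx
  have h1 : 1 - Real.exp (-(2 * x)) = 2 * Real.exp (-x) * Real.sinh x := by
    rw [Real.sinh_eq, Real.exp_neg x, show (-(2*x)) = (-x) + (-x) by ring, Real.exp_add,
      Real.exp_neg x]
    have he : Real.exp x ≠ 0 := Real.exp_ne_zero _
    field_simp
  rw [h1]
  have he : Real.exp (-x) ≠ 0 := Real.exp_ne_zero _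
  field_simp

lemma integrable_pow_exp (p : ℕ) {b : ℝ} (hb : 0 < b) :
    IntegrableOn (fun x : ℝ => x ^ p * Real.exp (-(b * x))) (Set.Ioi 0) := by
  have h := integrableOn_rpow_mul_exp_neg_mul_rpow (p := 1) (s := (p:ℝ)) (b := b)
    (lt_of_lt_of_le (by norm_num) (Nat.cast_nonneg p)) one_pos hb
  refine h.congr_fun (fun x hx => ?_) measurableSet_Ioi
  dsimp only
  rw [Real.rpow_one, Real.rpow_natCast, neg_mul]

lemma integral_pow_exp (p : ℕ) {b : ℝ} (hb : 0 < b) :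
    ∫ x in Set.Ioi (0:ℝ), x ^ p * Real.exp (-(b * x)) = (p.factorial : ℝ) / b ^ (p + 1) := by
  have h := integral_rpow_mul_exp_neg_mul_Ioi (a := (p:ℝ) + 1) (r := b) (by positivity) hb
  rw [show ((p:ℝ) + 1 - 1) = (p:ℝ) by ring] at h
  rw [Real.Gamma_nat_eq_factorial] at h
  have heq : ∫ x in Set.Ioi (0:ℝ), x ^ p * Real.exp (-(b * x))
      = ∫ x in Set.Ioi (0:ℝ), x ^ ((p:ℝ)) * Real.exp (-(b * x)) := by
    refine setIntegral_congr_fun measurableSet_Ioi (fun x hx => ?_)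
    rw [Real.rpow_natCast]
  rw [heq, h, show ((p:ℝ)+1) = ((p+1 : ℕ):ℝ) by push_cast; ring, Real.rpow_natCast,
    div_pow, one_pow]
  ring

lemma summable_inv_nat_pow {s : ℕ} (hs : 2 ≤ s) :
    Summable (fun n : ℕ => 1 / (n:ℝ) ^ s) :=
  Real.summable_one_div_nat_pow.2 hs

lemma summable_odd_inv_pow {s : ℕ} (hs : 2 ≤ s) :
    Summable (fun k : ℕ => 1 / (2 * (k:ℝ) + 1) ^ s) := by
  have h := (summable_inv_nat_pow hs).comp_injective
    (i := fun k : ℕ => 2 * k + 1) (fun a b hab => by simp only [] at hab; omega)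
  refine h.congr (fun k => ?_)
  simp only [Function.comp]
  push_cast
  ring_nf

lemma tsum_odd_inv_pow {s : ℕ} (hs : 2 ≤ s) :
    ∑' k : ℕ, 1 / (2 * (k:ℝ) + 1) ^ s
      = (1 - (1/2:ℝ) ^ s) * ∑' k : ℕ, 1 / ((k:ℝ) + 1) ^ s := by
  set f : ℕ → ℝ := fun n => 1 / (n:ℝ) ^ s with hf
  have hsum : Summable f := summable_inv_nat_pow hs
  have hze : ∑' k : ℕ, 1 / ((k:ℝ) + 1) ^ s = ∑' n, f n := by
    rw [Summable.tsum_eq_zero_add hsum]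
    have : f 0 = 0 := by
      simp [hf, zero_pow (by omega : s ≠ 0)]
    rw [this, zero_add]
    exact tsum_congr (fun k => by simp [hf])
  have heven : Summable (fun k : ℕ => f (2 * k)) :=
    hsum.comp_injective (i := fun k : ℕ => 2 * k) (fun a b hab => by simp only [] at hab; omega)
  have hodd : Summable (fun k : ℕ => f (2 * k + 1)) :=
    hsum.comp_injective (i := fun k : ℕ => 2 * k + 1) (fun a b hab => by simp only [] at hab; omega)
  have hsplit := tsum_even_add_odd heven hodd
  have hoddeq : ∑' k : ℕ, f (2 * k + 1) = ∑' k : ℕ, 1 / (2 * (k:ℝ) + 1) ^ s :=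
    tsum_congr (fun k => by simp only [hf]; push_cast; ring_nf)
  have heveneq : ∑' k : ℕ, f (2 * k) = (1/2:ℝ) ^ s * ∑' n, f n := by
    rw [Summable.tsum_eq_zero_add heven]
    have h0 : f (2 * 0) = 0 := by simp [hf, zero_pow (by omega : s ≠ 0)]
    rw [h0, zero_add]
    have : ∀ k : ℕ, f (2 * (k + 1)) = (1/2:ℝ) ^ s * (1 / ((k:ℝ) + 1) ^ s) := by
      intro k
      simp only [hf]
      push_cast
      rw [div_pow, one_pow]
      rw [show (2 * ((k:ℝ) + 1)) = 2 * ((k:ℝ)+1) by ring, mul_pow]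
      field_simp
    rw [tsum_congr this, tsum_mul_left, hze]
  rw [hoddeq, heveneq] at hsplit
  rw [hze]
  linarith [hsplit]

lemma prod_expand (K : ℕ) (c : ℕ → ℕ) (hc : ∀ j, j < K → 0 < c j) :
    ∃ q : ℕ → ℚ, (∀ i, i ≤ K → 0 < q i) ∧
      ∀ x : ℝ, (∏ j ∈ Finset.range K, (x ^ 2 + (c j : ℝ) ^ 2 * Real.pi ^ 2))
        = ∑ i ∈ Finset.range (K + 1), (q i : ℝ) * x ^ (2 * (K - i)) * Real.pi ^ (2 * i) := by
  induction K with
  | zero => exact ⟨fun _ => 1, fun i _ => one_pos, fun x => by simp⟩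
  | succ K ih =>
    obtain ⟨q, hq, hqx⟩ := ih (fun j hj => hc j (hj.trans (Nat.lt_succ_self K)))
    have hcK : 0 < c K := hc K (Nat.lt_succ_self K)
    have hcQ : (0:ℚ) < (c K : ℚ) := by exact_mod_cast hcK
    refine ⟨fun i => (if i = K + 1 then 0 else q i)
        + (c K : ℚ) ^ 2 * (if i = 0 then 0 else q (i - 1)), ?_, ?_⟩
    · intro i hi
      dsimp only
      rcases eq_or_ne i (K + 1) with h | h
      · subst h
        rw [if_pos rfl, if_neg (by omega : K + 1 ≠ 0)]
        have := hq (K + 1 - 1) (by omega)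
        positivity
      · rw [if_neg h]
        have h1 : 0 < q i := hq i (by omega)
        split_ifs with h0
        · simpa using h1
        · have := hq (i - 1) (by omega)
          positivity
    · intro x
      dsimp only
      rw [Finset.prod_range_succ, hqx x, mul_add]
      have e1 : (∑ i ∈ Finset.range (K + 1), (q i : ℝ) * x ^ (2 * (K - i)) * Real.pi ^ (2 * i)) * x ^ 2
          = ∑ i ∈ Finset.range (K + 1), (q i : ℝ) * x ^ (2 * (K + 1 - i)) * Real.pi ^ (2 * i) := by
        rw [Finset.sum_mul]
        refine Finset.sum_congr rfl (fun i hi => ?_)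
        have hiK : i ≤ K := Nat.lt_succ_iff.mp (Finset.mem_range.mp hi)
        have h2 : 2 * (K + 1 - i) = 2 * (K - i) + 2 := by omega
        rw [h2, pow_add]
        ring
      have e2 : (∑ i ∈ Finset.range (K + 1), (q i : ℝ) * x ^ (2 * (K - i)) * Real.pi ^ (2 * i)) * ((c K : ℝ) ^ 2 * Real.pi ^ 2)
          = ∑ i ∈ Finset.range (K + 1), (c K : ℝ) ^ 2 * (q i : ℝ) * x ^ (2 * (K + 1 - (i + 1))) * Real.pi ^ (2 * (i + 1)) := by
        rw [Finset.sum_mul]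
        refine Finset.sum_congr rfl (fun i hi => ?_)
        have h2 : 2 * (i + 1) = 2 * i + 2 := by ring
        rw [h2, pow_add, Nat.add_sub_add_right]
        ring
      rw [e1, e2]
      have split : ∀ i ∈ Finset.range (K + 1 + 1),
          (((if i = K + 1 then 0 else q i) + (c K : ℚ) ^ 2 * (if i = 0 then 0 else q (i - 1)) : ℚ) : ℝ)
              * x ^ (2 * (K + 1 - i)) * Real.pi ^ (2 * i)
          = ((if i = K + 1 then (0:ℝ) else (q i : ℝ)) * x ^ (2 * (K + 1 - i)) * Real.pi ^ (2 * i))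
            + ((c K : ℝ) ^ 2 * (if i = 0 then (0:ℝ) else (q (i-1) : ℝ)) * x ^ (2 * (K + 1 - i)) * Real.pi ^ (2 * i)) := by
        intro i _
        push_cast
        split_ifs <;> ring
      have f1 : ∑ i ∈ Finset.range (K + 1 + 1), (if i = K + 1 then (0:ℝ) else (q i : ℝ)) * x ^ (2 * (K + 1 - i)) * Real.pi ^ (2 * i)
          = ∑ i ∈ Finset.range (K + 1), (q i : ℝ) * x ^ (2 * (K + 1 - i)) * Real.pi ^ (2 * i) := by
        conv_lhs => rw [Finset.sum_range_succ]
        rw [if_pos rfl, zero_mul, zero_mul, add_zero]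
        exact Finset.sum_congr rfl fun i hi => by
          rw [if_neg (show i ≠ K + 1 from by have := Finset.mem_range.mp hi; omega)]
      have f2 : ∑ i ∈ Finset.range (K + 1 + 1), ((c K : ℝ) ^ 2 * (if i = 0 then (0:ℝ) else (q (i-1) : ℝ)) * x ^ (2 * (K + 1 - i)) * Real.pi ^ (2 * i))
          = ∑ i ∈ Finset.range (K + 1), (c K : ℝ) ^ 2 * (q i : ℝ) * x ^ (2 * (K + 1 - (i + 1))) * Real.pi ^ (2 * (i + 1)) := by
        conv_lhs => rw [Finset.sum_range_succ']
        rw [if_pos rfl, mul_zero, zero_mul, zero_mul, add_zero]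
        exact Finset.sum_congr rfl fun i hi => by
          rw [if_neg (Nat.succ_ne_zero i), Nat.add_sub_cancel]
      rw [Finset.sum_congr rfl split, Finset.sum_add_distrib, f1, f2]
lemma prod_Icc_one_eq_range (f : ℕ → ℝ) (K : ℕ) :
    ∏ j ∈ Finset.Icc 1 K, f j = ∏ j ∈ Finset.range K, f (j + 1) := by
  induction K with
  | zero => simp
  | succ K ih => rw [Finset.prod_Icc_succ_top (by omega), ih, Finset.prod_range_succ]

lemma main_core (k m : ℕ) (hk : 1 ≤ k) :
    ∃ ρ : ℕ → ℚ,
      (∀ i ∈ Finset.range ((2 * k + (2 * m + 1) - 1) / 2), 0 < ρ i) ∧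
      (∫ ℓ in Set.Ioi (0 : ℝ), ℓ * crownVol (2 * k) ℓ * crownVol (2 * m + 1) ℓ)
        = ∑ i ∈ Finset.range ((2 * k + (2 * m + 1) - 1) / 2),
            (ρ i : ℝ) * Real.pi ^ (2 * i) *
              ∑' t : ℕ, 1 / ((t : ℝ) + 1) ^ (2 * k + (2 * m + 1) - 2 * i) := by
  classical
  set D := (k - 1) + m with hDdef
  have hrange : (2 * k + (2 * m + 1) - 1) / 2 = D + 1 := by omega
  set c : ℕ → ℕ := fun j => if j < k - 1 then 2 * (j + 1) else 2 * (j - (k - 1)) + 1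
    with hcdef
  have hcpos : ∀ j, j < D → 0 < c j := by
    intro j hj
    simp only [hcdef]
    split_ifs <;> omega
  obtain ⟨q, hq, hqx⟩ := prod_expand D c hcpos
  set F : ℝ := ((2 * k - 1).factorial : ℝ) * ((2 * m).factorial : ℝ) with hFdef
  have hFpos : 0 < F := by
    have := Nat.factorial_pos (2 * k - 1)
    have := Nat.factorial_pos (2 * m)
    positivity
  -- the coefficient constants
  set C : ℕ → ℝ := fun i => (q i : ℝ) * Real.pi ^ (2 * i) / (2 * F) * 2 *
    ((2 * (D - i) + 2).factorial : ℝ) with hCdef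
  -- the summands
  set G : ℕ → ℝ → ℝ := fun t ℓ =>
    (∑ i ∈ Finset.range (D + 1),
      (q i : ℝ) * Real.pi ^ (2 * i) / (2 * F) * ℓ ^ (2 * (D - i) + 2)) *
      (2 * Real.exp (-((2 * (t : ℝ) + 1) * ℓ))) with hGdef
  have hb : ∀ t : ℕ, (0 : ℝ) < 2 * (t : ℝ) + 1 := fun t => by positivity
  -- pointwise identity
  have hpt : ∀ ℓ ∈ Set.Ioi (0 : ℝ),
      ℓ * crownVol (2 * k) ℓ * crownVol (2 * m + 1) ℓ = ∑' t : ℕ, G t ℓ := by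
    intro ℓ hℓ
    have hℓ0 : (0 : ℝ) < ℓ := hℓ
    have hs2 : Real.sinh (ℓ / 2) ≠ 0 := ne_of_gt (Real.sinh_pos_iff.2 (by linarith))
    have hc2 : Real.cosh (ℓ / 2) ≠ 0 := ne_of_gt (Real.cosh_pos _)
    have hsinh : Real.sinh ℓ = 2 * Real.sinh (ℓ / 2) * Real.cosh (ℓ / 2) := by
      rw [show ℓ = 2 * (ℓ / 2) by ring, Real.sinh_two_mul]
      ring_nf
    have hsum : ∑' t : ℕ, G t ℓ =
        (∑ i ∈ Finset.range (D + 1),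
          (q i : ℝ) * Real.pi ^ (2 * i) / (2 * F) * ℓ ^ (2 * (D - i) + 2)) *
          (1 / Real.sinh ℓ) := by
      simp only [hGdef]
      rw [tsum_mul_left, ← one_div_sinh_eq hℓ0]
    rw [hsum]
    -- unfold crownVol
    have hk2 : (2 * k) % 2 = 0 := by omega
    have hm2 : ¬ ((2 * m + 1) % 2 = 0) := by omega
    have hkdiv : 2 * k / 2 = k := by omega
    have hmdiv : (2 * m + 1) / 2 = m := by omega
    rw [crownVol, if_pos hk2, crownVol, if_neg hm2, hkdiv, hmdiv]
    have hmsub : 2 * m + 1 - 1 = 2 * m := by omega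
    rw [hmsub]
    -- rewrite the two products as one product over `range D`
    have hP1 : (∏ j ∈ Finset.Icc 1 (k - 1), (ℓ ^ 2 + (2 * (j : ℝ)) ^ 2 * Real.pi ^ 2))
        = ∏ j ∈ Finset.range (k - 1), (ℓ ^ 2 + ((c j : ℕ) : ℝ) ^ 2 * Real.pi ^ 2) := by
      rw [prod_Icc_one_eq_range]
      refine Finset.prod_congr rfl fun j hj => ?_
      have hj' : j < k - 1 := Finset.mem_range.mp hj
      simp only [hcdef, if_pos hj']
      push_cast
      ring
    have hP2 : (∏ j ∈ Finset.Icc 1 m, (ℓ ^ 2 + (2 * (j : ℝ) - 1) ^ 2 * Real.pi ^ 2))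
        = ∏ j ∈ Finset.range m, (ℓ ^ 2 + ((c ((k - 1) + j) : ℕ) : ℝ) ^ 2 * Real.pi ^ 2) := by
      rw [prod_Icc_one_eq_range]
      refine Finset.prod_congr rfl fun j hj => ?_
      simp only [hcdef, if_neg (show ¬ ((k - 1) + j < k - 1) by omega)]
      have : (k - 1) + j - (k - 1) = j := by omega
      rw [this]
      push_cast
      ring
    have hcomb : (∏ j ∈ Finset.range (k - 1), (ℓ ^ 2 + ((c j : ℕ) : ℝ) ^ 2 * Real.pi ^ 2)) *
        (∏ j ∈ Finset.range m, (ℓ ^ 2 + ((c ((k - 1) + j) : ℕ) : ℝ) ^ 2 * Real.pi ^ 2))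
        = ∑ i ∈ Finset.range (D + 1),
            (q i : ℝ) * ℓ ^ (2 * (D - i)) * Real.pi ^ (2 * i) := by
      rw [← Finset.prod_range_add (fun j => ℓ ^ 2 + ((c j : ℕ) : ℝ) ^ 2 * Real.pi ^ 2) (k - 1) m]
      exact hqx ℓ
    have hpoly : (∑ i ∈ Finset.range (D + 1),
        (q i : ℝ) * Real.pi ^ (2 * i) / (2 * F) * ℓ ^ (2 * (D - i) + 2))
        = ℓ ^ 2 * (∑ i ∈ Finset.range (D + 1),
            (q i : ℝ) * ℓ ^ (2 * (D - i)) * Real.pi ^ (2 * i)) / (2 * F) := by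
      rw [Finset.mul_sum, Finset.sum_div]
      refine Finset.sum_congr rfl fun i _ => ?_
      rw [pow_add]
      ring
    rw [hpoly, ← hcomb, ← hP1, ← hP2, hsinh]
    have hF1 : ((2 * k - 1).factorial : ℝ) ≠ 0 := by
      exact_mod_cast (Nat.factorial_pos _).ne'
    have hF2 : ((2 * m).factorial : ℝ) ≠ 0 := by
      exact_mod_cast (Nat.factorial_pos _).ne'
    rw [hFdef]
    field_simp
    ring
    exact Finset.prod_congr rfl fun x _ => by ring
  -- integrability of each G t
  have hGform : ∀ t : ℕ, G t = fun ℓ => ∑ i ∈ Finset.range (D + 1),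
      ((q i : ℝ) * Real.pi ^ (2 * i) / (2 * F) * 2) *
        (ℓ ^ (2 * (D - i) + 2) * Real.exp (-((2 * (t : ℝ) + 1) * ℓ))) := by
    intro t
    funext ℓ
    simp only [hGdef, Finset.sum_mul]
    exact Finset.sum_congr rfl fun i _ => by ring
  have hGint : ∀ t : ℕ, IntegrableOn (G t) (Set.Ioi 0) := by
    intro t
    rw [hGform t]
    exact integrable_finset_sum _ fun i _ => ((integrable_pow_exp _ (hb t)).const_mul _)
  have hGval : ∀ t : ℕ, (∫ ℓ in Set.Ioi (0 : ℝ), G t ℓ)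
      = ∑ i ∈ Finset.range (D + 1), C i * (1 / (2 * (t : ℝ) + 1) ^ (2 * (D - i) + 3)) := by
    intro t
    rw [hGform t, integral_finset_sum _
      (fun i _ => ((integrable_pow_exp _ (hb t)).const_mul _))]
    refine Finset.sum_congr rfl fun i _ => ?_
    rw [MeasureTheory.integral_const_mul, integral_pow_exp _ (hb t), hCdef]
    have : 2 * (D - i) + 2 + 1 = 2 * (D - i) + 3 := by omega
    rw [this]
    ring
  -- nonnegativity
  have hGnn : ∀ t : ℕ, ∀ ℓ ∈ Set.Ioi (0 : ℝ), 0 ≤ G t ℓ := by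
    intro t ℓ hℓ
    have hℓ0 : (0 : ℝ) < ℓ := hℓ
    simp only [hGdef]
    have h1 : 0 ≤ ∑ i ∈ Finset.range (D + 1),
        (q i : ℝ) * Real.pi ^ (2 * i) / (2 * F) * ℓ ^ (2 * (D - i) + 2) := by
      refine Finset.sum_nonneg fun i hi => ?_
      have hqi : (0 : ℝ) < (q i : ℝ) := by
        exact_mod_cast hq i (Nat.lt_succ_iff.mp (Finset.mem_range.mp hi))
      positivity
    positivity
  -- summability
  have hCodd : ∀ i ∈ Finset.range (D + 1),
      Summable (fun t : ℕ => C i * (1 / (2 * (t:ℝ) + 1) ^ (2 * (D - i) + 3))) :=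
    fun i _ => (summable_odd_inv_pow (by omega)).mul_left _
  have hnorm : ∀ t : ℕ, (∫ ℓ in Set.Ioi (0:ℝ), ‖G t ℓ‖) = ∫ ℓ in Set.Ioi (0:ℝ), G t ℓ :=
    fun t => setIntegral_congr_fun measurableSet_Ioi fun ℓ hℓ =>
      Real.norm_of_nonneg (hGnn t ℓ hℓ)
  have hsummable : Summable (fun t : ℕ => ∫ ℓ in Set.Ioi (0:ℝ), ‖G t ℓ‖) := by
    simp_rw [hnorm, hGval]
    exact summable_sum hCodd
  have key : ∑' t : ℕ, (∫ ℓ in Set.Ioi (0:ℝ), G t ℓ)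
      = ∫ ℓ in Set.Ioi (0:ℝ), ∑' t : ℕ, G t ℓ :=
    MeasureTheory.integral_tsum_of_summable_integral_norm hGint hsummable
  have hint : (∫ ℓ in Set.Ioi (0:ℝ), ℓ * crownVol (2*k) ℓ * crownVol (2*m+1) ℓ)
      = ∑' t : ℕ, (∫ ℓ in Set.Ioi (0:ℝ), G t ℓ) := by
    rw [key]
    exact setIntegral_congr_fun measurableSet_Ioi hpt
  have hF1 : ((2 * k - 1).factorial : ℝ) ≠ 0 := by
    exact_mod_cast (Nat.factorial_pos _).ne'
  have hF2 : ((2 * m).factorial : ℝ) ≠ 0 := by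
    exact_mod_cast (Nat.factorial_pos _).ne'
  refine ⟨fun i => q i * ((2 * (D - i) + 2).factorial : ℚ) * (1 - (1/2:ℚ)^(2*(D-i)+3))
      / (((2*k-1).factorial : ℚ) * ((2*m).factorial : ℚ)), ?_, ?_⟩
  · intro i hi
    rw [hrange] at hi
    have hi' : i ≤ D := Nat.lt_succ_iff.mp (Finset.mem_range.mp hi)
    have h1 := hq i hi'
    have h2 : (1/2:ℚ)^(2*(D-i)+3) < 1 := by
      apply pow_lt_one₀ (by norm_num) (by norm_num) (by omega)
    have h3 : (0:ℚ) < ((2*k-1).factorial : ℚ) := by exact_mod_cast Nat.factorial_pos _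
    have h4 : (0:ℚ) < ((2*m).factorial : ℚ) := by exact_mod_cast Nat.factorial_pos _
    have h5 : (0:ℚ) < ((2*(D-i)+2).factorial : ℚ) := by exact_mod_cast Nat.factorial_pos _
    have h6 : (0:ℚ) < 1 - (1/2:ℚ)^(2*(D-i)+3) := by linarith
    positivity
  · rw [hrange, hint, tsum_congr hGval, Summable.tsum_finsetSum hCodd]
    refine Finset.sum_congr rfl fun i hi => ?_
    have hi' : i ≤ D := Nat.lt_succ_iff.mp (Finset.mem_range.mp hi)
    rw [tsum_mul_left, tsum_odd_inv_pow (by omega : 2 ≤ 2*(D-i)+3)]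
    have hexp : 2 * k + (2 * m + 1) - 2 * i = 2 * (D - i) + 3 := by omega
    rw [hexp, hCdef, hFdef]
    push_cast
    field_simp

/-- For `n = a₁ + a₂` odd, the Mirzakhani volume of the moduli space of
`(a₁,a₂)`-annuli is a positive rational combination `∑ᵢ ρ_{2i} π^{2i} ζ(n-2i)`,
`0 ≤ 2i ≤ n - 3`. -/
theorem annuli_volume_odd (a₁ a₂ : ℕ) (h₁ : 1 ≤ a₁) (h₂ : 1 ≤ a₂)
    (hodd : Odd (a₁ + a₂)) :
    ∃ ρ : ℕ → ℚ,
      (∀ i ∈ Finset.range ((a₁ + a₂ - 1) / 2), 0 < ρ i) ∧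
      (∫ ℓ in Set.Ioi (0 : ℝ), ℓ * crownVol a₁ ℓ * crownVol a₂ ℓ)
        = ∑ i ∈ Finset.range ((a₁ + a₂ - 1) / 2),
            (ρ i : ℝ) * Real.pi ^ (2 * i) *
              ∑' k : ℕ, 1 / ((k : ℝ) + 1) ^ (a₁ + a₂ - 2 * i) := by
  rw [Nat.odd_iff] at hodd
  rcases Nat.even_or_odd a₁ with he | ho
  · rw [Nat.even_iff] at he
    obtain ⟨k, m, hk, hm, hk1⟩ : ∃ k m, a₁ = 2 * k ∧ a₂ = 2 * m + 1 ∧ 1 ≤ k :=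
      ⟨a₁ / 2, a₂ / 2, by omega, by omega, by omega⟩
    subst hk; subst hm
    exact main_core k m hk1
  · rw [Nat.odd_iff] at ho
    obtain ⟨k, m, hk, hm, hk1⟩ : ∃ k m, a₂ = 2 * k ∧ a₁ = 2 * m + 1 ∧ 1 ≤ k :=
      ⟨a₂ / 2, a₁ / 2, by omega, by omega, by omega⟩
    subst hk; subst hm
    rw [show 2 * m + 1 + 2 * k = 2 * k + (2 * m + 1) from by ring]
    have hswap : ∀ ℓ : ℝ, ℓ * crownVol (2 * m + 1) ℓ * crownVol (2 * k) ℓ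
        = ℓ * crownVol (2 * k) ℓ * crownVol (2 * m + 1) ℓ := fun ℓ => by ring
    simp_rw [hswap]
    exact main_core k m hk1
end

section
/- The integral over the open unit square (0,1)² of the function (u₁,u₂) ↦ 1/(1 − u₂ + u₁·u₂), with respect to two-dimensional Lebesgue measure, equals π²/6. -/
open MeasureTheory Real

lemma my_integral_pow_Ioo (n : ℕ) :
    ∫ x in Set.Ioo (0:ℝ) 1, x ^ n = 1 / (n + 1) := by
  rw [← integral_Ioc_eq_integral_Ioo, ← intervalIntegral.integral_of_le zero_le_one]
  simp [integral_pow]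

lemma my_integral_one_sub_pow_Ioo (n : ℕ) :
    ∫ x in Set.Ioo (0:ℝ) 1, (1 - x) ^ n = 1 / (n + 1) := by
  rw [← integral_Ioc_eq_integral_Ioo, ← intervalIntegral.integral_of_le zero_le_one]
  rw [intervalIntegral.integral_comp_sub_left (fun x => x ^ n) 1]
  simp [integral_pow]

/-- The Mirzakhani volume of the moduli space of ideal hyperbolic pentagons:
`∫∫_{(0,1)²} du₁du₂/(1 - u₂ + u₁u₂) = π²/6`. -/
theorem pentagon_volume :
    (∫ u in Set.Ioo (0 : ℝ) 1 ×ˢ Set.Ioo (0 : ℝ) 1,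
        1 / (1 - u.2 + u.1 * u.2))
      = Real.pi ^ 2 / 6 := by
  set s : Set (ℝ × ℝ) := Set.Ioo (0:ℝ) 1 ×ˢ Set.Ioo (0:ℝ) 1 with hs
  have hmeas : MeasurableSet s := measurableSet_Ioo.prod measurableSet_Ioo
  set f : ℕ → ℝ × ℝ → ℝ := fun n u => (1 - u.1) ^ n * u.2 ^ n with hf
  have hfc : ∀ n, Continuous (f n) := fun n => by
    exact ((continuous_const.sub continuous_fst).pow n).mul (continuous_snd.pow n)
  -- nonnegativity on s
  have hnonneg : ∀ n, ∀ u ∈ s, 0 ≤ f n u := by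
    intro n u hu
    have h1 : (0:ℝ) ≤ 1 - u.1 := by
      have := hu.1.2
      linarith
    have h2 : (0:ℝ) ≤ u.2 := hu.2.1.le
    positivity
  -- integrability on s
  have hint : ∀ n, IntegrableOn (f n) s := by
    intro n
    have hK : IsCompact (Set.Icc (0:ℝ) 1 ×ˢ Set.Icc (0:ℝ) 1) :=
      isCompact_Icc.prod isCompact_Icc
    exact ((hfc n).continuousOn.integrableOn_compact hK).mono_set
      (Set.prod_mono Set.Ioo_subset_Icc_self Set.Ioo_subset_Icc_self)
  -- value of each integral
  have hval : ∀ n, ∫ u in s, f n u = 1 / ((n:ℝ) + 1) ^ 2 := by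
    intro n
    rw [hs, hf]
    rw [Measure.volume_eq_prod, setIntegral_prod_mul (fun x => (1 - x) ^ n) (fun y => y ^ n)]
    rw [my_integral_one_sub_pow_Ioo, my_integral_pow_Ioo]
    rw [div_mul_div_comm, one_mul, sq]
  -- rewrite integrand as a geometric series
  have hgeo : ∀ u ∈ s, (1:ℝ) / (1 - u.2 + u.1 * u.2) = ∑' n : ℕ, f n u := by
    intro u hu
    have h1 : (0:ℝ) ≤ (1 - u.1) * u.2 := by
      have := hu.1.2; have := hu.2.1.le; nlinarith
    have h2 : (1 - u.1) * u.2 < 1 := by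
      have h3 := hu.1.1; have h4 := hu.1.2
      have h5 := hu.2.1; have h6 := hu.2.2
      nlinarith
    have : ∑' n : ℕ, ((1 - u.1) * u.2) ^ n = (1 - (1 - u.1) * u.2)⁻¹ :=
      tsum_geometric_of_lt_one h1 h2
    simp only [mul_pow] at this
    rw [hf]
    simp only [this]
    rw [one_div]
    congr 1
    ring
  rw [setIntegral_congr_fun hmeas hgeo]
  -- summability control
  have hsummable : Summable (fun n : ℕ => 1 / ((n:ℝ) + 1) ^ 2) := by
    have := Real.summable_one_div_nat_pow.mpr (le_refl 2)
    exact_mod_cast this.comp_injective (add_left_injective 1) |>.congr (by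
      intro n; norm_num) |>.congr (fun n => rfl)
  have hlin : ∀ n, ∫⁻ u in s, ‖f n u‖₊ = ENNReal.ofReal (1 / ((n:ℝ) + 1) ^ 2) := by
    intro n
    simp only [← enorm_eq_nnnorm]
    rw [← ofReal_integral_norm_eq_lintegral_enorm (hint n)]
    congr 1
    rw [← hval n]
    refine setIntegral_congr_fun hmeas fun u hu => ?_
    exact Real.norm_of_nonneg (hnonneg n u hu)
  have hsum_ne_top : ∑' n : ℕ, ∫⁻ u in s, ‖f n u‖₊ ≠ ⊤ := by
    simp only [hlin]
    rw [← ENNReal.ofReal_tsum_of_nonneg (fun n => by positivity) hsummable]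
    exact ENNReal.ofReal_ne_top
  rw [integral_tsum (fun n => (hfc n).aestronglyMeasurable.restrict) hsum_ne_top]
  simp only [hval]
  -- sum equals π²/6
  have hz := hasSum_zeta_two.tsum_eq
  rw [Summable.tsum_eq_zero_add hasSum_zeta_two.summable] at hz
  simp only [Nat.cast_zero, Nat.cast_add, Nat.cast_one, zero_add] at hz
  rw [← hz]
  norm_num
end

section
/- For every integer n ≥ 5, the integral over the open simplex {z ∈ ℝ^{n−3} : 0 < z₂ < z₃ < ⋯ < z_{n−2} < 1} of ∏_{i=1}^{n−3} 1/(z_{i+2} − z_i), where one sets z₁ = 0 and z_{n−1} = 1, equals the integral over the open cube (0,1)^{n−3} of ∏_{i=1}^{n−4} 1/(1 − yᵢ·y_{i+1}), both with respect to (n−3)-dimensional Lebesgue measure. -/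
open MeasureTheory Real

/-- Extend a tuple `z : Fin m → ℝ` to a function on `ℕ` (0-indexed), by `0` outside. -/
noncomputable def padR (m : ℕ) (z : Fin m → ℝ) (i : ℕ) : ℝ :=
  if h : i < m then z ⟨i, h⟩ else 0

/-- The points `z₁ = 0 < z₂ < ⋯ < z_{n-2} < z_{n-1} = 1`: for `2 ≤ j ≤ n-2` the value
is a variable `z_j`, while `z_j = 0` for `j ≤ 1` and `z_j = 1` for `j ≥ n-1`. -/
noncomputable def extZ (n : ℕ) (z : Fin (n - 3) → ℝ) (j : ℕ) : ℝ :=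
  if j ≤ 1 then 0 else if n - 2 < j then 1 else padR (n - 3) z (j - 2)

namespace NgonAux

/-- The change-of-variables map `z_i = ∏_{k ≥ i} y_k`. -/
noncomputable def T (m : ℕ) (y : Fin m → ℝ) : Fin m → ℝ := fun i => ∏ k ∈ Finset.Ici i, y k

/-- The candidate derivative of `T`. -/
noncomputable def T' (m : ℕ) (y : Fin m → ℝ) : (Fin m → ℝ) →L[ℝ] (Fin m → ℝ) :=
  ContinuousLinearMap.pi fun i =>
    ∑ k ∈ Finset.Ici i, (∏ j ∈ (Finset.Ici i).erase k, y j) • ContinuousLinearMap.proj k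

lemma hasFDerivAt_T (m : ℕ) (y : Fin m → ℝ) : HasFDerivAt (T m) (T' m y) y :=
  hasFDerivAt_pi.2 fun _ => hasFDerivAt_finset_prod

/-- `ℕ`-indexed partial products `zb t = y_t y_{t+1} ⋯ y_{m-1}`. -/
noncomputable def zb (m : ℕ) (y : Fin m → ℝ) (t : ℕ) : ℝ :=
  ∏ k ∈ Finset.Ico t m, padR m y k

lemma zb_of_le (m : ℕ) (y : Fin m → ℝ) {t : ℕ} (h : m ≤ t) : zb m y t = 1 := by
  simp [zb, Finset.Ico_eq_empty (show ¬ t < m by omega)]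

lemma zb_succ (m : ℕ) (y : Fin m → ℝ) {t : ℕ} (h : t < m) :
    zb m y t = padR m y t * zb m y (t + 1) :=
  Finset.prod_eq_prod_Ico_succ_bot h _

lemma padR_lt (m : ℕ) (y : Fin m → ℝ) {t : ℕ} (h : t < m) : padR m y t = y ⟨t, h⟩ := dif_pos h

lemma T_eq (m : ℕ) (y : Fin m → ℝ) (i : Fin m) : T m y i = zb m y i.val := by
  have h1 : Finset.Ico i.val m = Finset.Icc i.val (m - 1) := by
    ext x; simp only [Finset.mem_Ico, Finset.mem_Icc]; have := i.isLt; omega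
  rw [zb, ← Fin.map_valEmbedding_Ici, Finset.prod_map]
  exact (Finset.prod_congr rfl fun k _ => by
    simp [Fin.valEmbedding_apply, padR_lt m y k.isLt]).symm

lemma Ioi_eq (m : ℕ) (y : Fin m → ℝ) (i : Fin m) :
    ∏ j ∈ Finset.Ioi i, y j = zb m y (i.val + 1) := by
  have h1 : Finset.Ico (i.val + 1) m = Finset.Ioc i.val (m - 1) := by
    ext x; simp only [Finset.mem_Ico, Finset.mem_Ioc]; have := i.isLt; omega
  rw [zb, show Finset.Ico (i.val + 1) m = Finset.Ioo i.val m from by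
    ext x; simp only [Finset.mem_Ico, Finset.mem_Ioo]; omega, ← Fin.map_valEmbedding_Ioi, Finset.prod_map]
  exact (Finset.prod_congr rfl fun k _ => by
    simp [Fin.valEmbedding_apply, padR_lt m y k.isLt]).symm

section Pos

variable {m : ℕ} {y : Fin m → ℝ} (hy : ∀ i, y i ∈ Set.Ioo (0 : ℝ) 1)
include hy

lemma padR_mem {t : ℕ} (h : t < m) : padR m y t ∈ Set.Ioo (0 : ℝ) 1 := by
  rw [padR_lt m y h]; exact hy _

lemma zb_pos_le : ∀ j t, m - t ≤ j → 0 < zb m y t ∧ zb m y t ≤ 1 := by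
  intro j
  induction j with
  | zero => intro t ht; rw [zb_of_le m y (by omega)]; norm_num
  | succ j ih =>
    intro t ht
    by_cases h : m ≤ t
    · rw [zb_of_le m y h]; norm_num
    · push_neg at h
      obtain ⟨h1, h2⟩ := ih (t + 1) (by omega)
      obtain ⟨h3, h4⟩ := padR_mem hy h
      rw [zb_succ m y h]
      constructor
      · positivity
      · nlinarith

lemma zb_pos (t : ℕ) : 0 < zb m y t := (zb_pos_le hy _ t le_rfl).1

lemma zb_le_one (t : ℕ) : zb m y t ≤ 1 := (zb_pos_le hy _ t le_rfl).2

lemma zb_lt_one {t : ℕ} (h : t < m) : zb m y t < 1 := by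
  rw [zb_succ m y h]
  obtain ⟨h1, h2⟩ := padR_mem hy h
  have h3 := zb_pos hy (t + 1)
  have h4 := zb_le_one hy (t + 1)
  nlinarith

lemma zb_lt_succ {t : ℕ} (h : t + 1 < m) : zb m y t < zb m y (t + 1) := by
  rw [zb_succ m y (by omega)]
  obtain ⟨h1, h2⟩ := padR_mem hy (show t < m by omega)
  have h3 := zb_pos hy (t + 1)
  nlinarith

lemma zb_lt {s t : ℕ} (hs : s < t) (ht : t < m) : zb m y s < zb m y t := by
  induction t, hs using Nat.le_induction with
  | base => exact zb_lt_succ hy ht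
  | succ t hst ih => exact (ih (by omega)).trans (zb_lt_succ hy ht)

end Pos

lemma det_T' (m : ℕ) (y : Fin m → ℝ) :
    (T' m y).det = ∏ i ∈ Finset.range m, zb m y (i + 1) := by
  have hM : ∀ v : Fin m → ℝ, ∀ i, T' m y v i =
      ∑ k ∈ Finset.Ici i, (∏ j ∈ (Finset.Ici i).erase k, y j) * v k := by
    intro v i
    simp [T', ContinuousLinearMap.pi_apply, ContinuousLinearMap.sum_apply,
      ContinuousLinearMap.smul_apply, ContinuousLinearMap.proj_apply, smul_eq_mul]
  have hcoe : (T' m y).det = LinearMap.det ((T' m y) : (Fin m → ℝ) →ₗ[ℝ] (Fin m → ℝ)) := rfl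
  rw [hcoe, ← LinearMap.det_toMatrix' ((T' m y) : (Fin m → ℝ) →ₗ[ℝ] (Fin m → ℝ))]
  have happ : ∀ i j, LinearMap.toMatrix' ((T' m y) : (Fin m → ℝ) →ₗ[ℝ] (Fin m → ℝ)) i j
      = if i ≤ j then ∏ l ∈ (Finset.Ici i).erase j, y l else 0 := by
    intro i j
    rw [LinearMap.toMatrix'_apply]
    have : ((T' m y) : (Fin m → ℝ) →ₗ[ℝ] (Fin m → ℝ)) (fun j' => if j' = j then 1 else 0) i
        = ∑ k ∈ Finset.Ici i, (∏ l ∈ (Finset.Ici i).erase k, y l)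
            * (if k = j then 1 else 0) := hM _ i
    rw [show (Pi.single j (1 : ℝ) : Fin m → ℝ) = fun j' => if j' = j then 1 else 0 from by
      ext j'; simp [Pi.single_apply], this]
    simp only [mul_ite, mul_one, mul_zero]
    rw [Finset.sum_ite_eq' (Finset.Ici i) j (fun k => ∏ l ∈ (Finset.Ici i).erase k, y l)]
    simp [Finset.mem_Ici]
  rw [Matrix.det_of_upperTriangular (by
    intro i j hji
    rw [happ i j, if_neg (by exact not_le.2 hji)])]
  rw [← Fin.prod_univ_eq_prod_range fun i => zb m y (i + 1)]
  refine Finset.prod_congr rfl fun i _ => ?_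
  rw [happ i i, if_pos le_rfl, Finset.Ici_erase, Ioi_eq]

lemma injOn_T (m : ℕ) :
    Set.InjOn (T m) {y : Fin m → ℝ | ∀ i, y i ∈ Set.Ioo (0 : ℝ) 1} := by
  intro y hy y' hy' h
  have hzb : ∀ t, zb m y t = zb m y' t := by
    intro t
    by_cases ht : t < m
    · rw [← T_eq m y ⟨t, ht⟩, ← T_eq m y' ⟨t, ht⟩, h]
    · rw [zb_of_le m y (by omega), zb_of_le m y' (by omega)]
  funext i
  have h1 := zb_succ m y i.isLt
  have h2 := zb_succ m y' i.isLt
  have h3 : (0 : ℝ) < zb m y' (i.val + 1) := zb_pos hy' _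
  rw [hzb i.val, hzb (i.val + 1)] at h1
  rw [h2] at h1
  have h4 := mul_right_cancel₀ (ne_of_gt h3) h1
  rw [padR_lt m y i.isLt, padR_lt m y' i.isLt] at h4
  exact h4.symm

lemma image_T (m : ℕ) (hm : 1 ≤ m) :
    T m '' {y : Fin m → ℝ | ∀ i, y i ∈ Set.Ioo (0 : ℝ) 1}
      = {z : Fin m → ℝ | StrictMono z ∧ ∀ i, z i ∈ Set.Ioo (0 : ℝ) 1} := by
  ext z
  constructor
  · rintro ⟨y, hy, rfl⟩
    refine ⟨fun a b hab => ?_, fun i => ?_⟩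
    · rw [T_eq, T_eq]
      exact zb_lt hy (by exact_mod_cast hab) b.isLt
    · rw [T_eq]
      exact ⟨zb_pos hy _, zb_lt_one hy i.isLt⟩
  · rintro ⟨hsm, hmem⟩
    set zE : ℕ → ℝ := fun t => if h : t < m then z ⟨t, h⟩ else 1 with hzE
    have hzEpos : ∀ t, 0 < zE t := by
      intro t; rw [hzE]; dsimp only
      split
      · exact (hmem _).1
      · norm_num
    have hlt : ∀ t (h : t < m), z ⟨t, h⟩ < zE (t + 1) := by
      intro t h; rw [hzE]; dsimp only
      split
      · exact hsm (by simp [Fin.lt_def])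
      · exact (hmem _).2
    set y : Fin m → ℝ := fun i => z i / zE (i.val + 1) with hy
    have hymem : ∀ i, y i ∈ Set.Ioo (0 : ℝ) 1 := by
      intro i
      constructor
      · exact div_pos (hmem i).1 (hzEpos _)
      · rw [div_lt_one (hzEpos _)]
        exact hlt i.val i.isLt
    refine ⟨y, hymem, ?_⟩
    have key : ∀ j t, m - t ≤ j → zb m y t = zE t := by
      intro j
      induction j with
      | zero =>
        intro t ht
        rw [zb_of_le m y (by omega), hzE]
        simp only [dif_neg (by omega : ¬ t < m)]
      | succ j ih =>
        intro t ht
        by_cases h : m ≤ t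
        · rw [zb_of_le m y h, hzE]
          simp only [dif_neg (by omega : ¬ t < m)]
        · push_neg at h
          rw [zb_succ m y h, ih (t + 1) (by omega), padR_lt m y h]
          have : y ⟨t, h⟩ = z ⟨t, h⟩ / zE (t + 1) := rfl
          rw [this, div_mul_cancel₀ _ (ne_of_gt (hzEpos (t + 1)))]
          rw [hzE]; simp only [dif_pos h]
    funext i
    rw [T_eq, key (m - i.val) i.val le_rfl, hzE]
    simp only [dif_pos i.isLt, Fin.eta]

lemma extZ_top (n : ℕ) (hn : 5 ≤ n) (y : Fin (n - 3) → ℝ) {i : ℕ} (h1 : 1 ≤ i)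
    (h2 : i ≤ n - 3) : extZ n (T (n - 3) y) (i + 2) = zb (n - 3) y i := by
  rw [extZ, if_neg (by omega)]
  by_cases hi : n - 2 < i + 2
  · rw [if_pos hi, zb_of_le _ _ (by omega)]
  · rw [if_neg hi]
    have hlt : i + 2 - 2 < n - 3 := by omega
    rw [show i + 2 - 2 = i from by omega, padR_lt _ _ (show i < n - 3 by omega),
      T_eq]

lemma extZ_bot (n : ℕ) (hn : 5 ≤ n) (y : Fin (n - 3) → ℝ) {i : ℕ} (h1 : 2 ≤ i)
    (h2 : i ≤ n - 3) : extZ n (T (n - 3) y) i = zb (n - 3) y (i - 2) := by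
  rw [extZ, if_neg (by omega), if_neg (by omega),
    padR_lt _ _ (show i - 2 < n - 3 by omega), T_eq]

lemma key_pointwise (n : ℕ) (hn : 5 ≤ n) (y : Fin (n - 3) → ℝ)
    (hy : ∀ i, y i ∈ Set.Ioo (0 : ℝ) 1) :
    |(T' (n - 3) y).det| *
      (∏ i ∈ Finset.Icc 1 (n - 3), 1 / (extZ n (T (n - 3) y) (i + 2) - extZ n (T (n - 3) y) i))
    = ∏ i ∈ Finset.range (n - 4), 1 / (1 - padR (n - 3) y i * padR (n - 3) y (i + 1)) := by
  have hm2 : 2 ≤ n - 3 := by omega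
  have hdet : (T' (n - 3) y).det = ∏ i ∈ Finset.range (n - 3), zb (n - 3) y (i + 1) := det_T' (n - 3) y
  have hdetpos : 0 < (T' (n - 3) y).det := by
    rw [hdet]; exact Finset.prod_pos fun i _ => zb_pos hy _
  rw [abs_of_pos hdetpos, hdet]
  have hprod1 : ∏ i ∈ Finset.range (n - 3), zb (n - 3) y (i + 1) = ∏ i ∈ Finset.Icc 1 (n - 3), zb (n - 3) y i := by
    rw [show Finset.Icc 1 (n - 3) = Finset.Ico 1 ((n - 3) + 1) from by rw [Finset.Ico_add_one_right_eq_Icc],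
      Finset.prod_Ico_eq_prod_range]
    simp [add_comm]
  rw [hprod1, ← Finset.prod_mul_distrib]
  have hterm : ∀ i ∈ Finset.Icc 1 (n - 3), zb (n - 3) y i *
      (1 / (extZ n (T (n - 3) y) (i + 2) - extZ n (T (n - 3) y) i))
      = if i = 1 then 1 else 1 / (1 - padR (n - 3) y (i - 2) * padR (n - 3) y (i - 1)) := by
    intro i hi
    rw [Finset.mem_Icc] at hi
    obtain ⟨hi1, hi2⟩ := hi
    rw [extZ_top n hn y hi1 hi2]
    by_cases h1 : i = 1
    · subst h1
      rw [if_pos rfl, show extZ n (T (n - 3) y) 1 = 0 from by rw [extZ, if_pos le_rfl], sub_zero,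
        mul_one_div, div_self (ne_of_gt (zb_pos hy 1))]
    · rw [if_neg h1, extZ_bot n hn y (by omega) hi2]
      have e1 : zb (n - 3) y (i - 2) = padR (n - 3) y (i - 2) * (padR (n - 3) y (i - 1) * zb (n - 3) y i) := by
        rw [zb_succ (n - 3) y (show i - 2 < (n - 3) by omega), show i - 2 + 1 = i - 1 from by omega,
          zb_succ (n - 3) y (show i - 1 < (n - 3) by omega), show i - 1 + 1 = i from by omega]
      obtain ⟨ha1, ha2⟩ := padR_mem hy (show i - 2 < (n - 3) by omega)
      obtain ⟨hb1, hb2⟩ := padR_mem hy (show i - 1 < (n - 3) by omega)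
      have hz : 0 < zb (n - 3) y i := zb_pos hy _
      have hne : 1 - padR (n - 3) y (i - 2) * padR (n - 3) y (i - 1) > 0 := by nlinarith
      have e2 : zb (n - 3) y i - padR (n - 3) y (i - 2) * (padR (n - 3) y (i - 1) * zb (n - 3) y i)
          = zb (n - 3) y i * (1 - padR (n - 3) y (i - 2) * padR (n - 3) y (i - 1)) := by ring
      rw [e1, e2, one_div, mul_inv, ← mul_assoc, mul_inv_cancel₀ (ne_of_gt hz), one_mul, one_div]
  rw [Finset.prod_congr rfl hterm]
  rw [show Finset.Icc 1 (n - 3) = Finset.Ico 1 ((n - 3) + 1) from by rw [Finset.Ico_add_one_right_eq_Icc],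
    Finset.prod_eq_prod_Ico_succ_bot (by omega : 1 < (n - 3) + 1), if_pos rfl, one_mul,
    Finset.prod_Ico_eq_prod_range]
  rw [show n - 3 + 1 - 2 = n - 4 from by omega]
  refine Finset.prod_congr rfl fun i _ => ?_
  rw [if_neg (show ¬ (2 + i = 1) by omega), show 2 + i - 2 = i from by omega,
    show 2 + i - 1 = i + 1 from by omega]

end NgonAux

open NgonAux in
/-- Chekhov's simplex integral for the Mirzakhani volume `V_{𝔻ₙ}` of the moduli space
of ideal `n`-gons equals the integral over the unit cube obtained by the change of
variables `y_j = z_j / z_{j+1}`. -/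
theorem ngon_volume_change_of_variables (n : ℕ) (hn : 5 ≤ n) :
    (∫ z in {z : Fin (n - 3) → ℝ | StrictMono z ∧ ∀ i, z i ∈ Set.Ioo (0 : ℝ) 1},
        ∏ i ∈ Finset.Icc 1 (n - 3), 1 / (extZ n z (i + 2) - extZ n z i))
      = ∫ y in {y : Fin (n - 3) → ℝ | ∀ i, y i ∈ Set.Ioo (0 : ℝ) 1},
          ∏ i ∈ Finset.range (n - 4), 1 / (1 - padR (n - 3) y i * padR (n - 3) y (i + 1)) := by
  set m := n - 3 with hm
  have hC : MeasurableSet {y : Fin m → ℝ | ∀ i, y i ∈ Set.Ioo (0 : ℝ) 1} := by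
    have : {y : Fin m → ℝ | ∀ i, y i ∈ Set.Ioo (0 : ℝ) 1}
        = Set.univ.pi fun _ : Fin m => Set.Ioo (0 : ℝ) 1 := by
      ext y; simp [Set.mem_pi]
    rw [this]
    exact MeasurableSet.univ_pi fun _ => measurableSet_Ioo
  rw [← image_T m (by omega),
    integral_image_eq_integral_abs_det_fderiv_smul volume hC
      (fun x _ => (hasFDerivAt_T m x).hasFDerivWithinAt) (injOn_T m)]
  refine setIntegral_congr_fun hC fun y hy => ?_
  rw [smul_eq_mul]
  exact key_pointwise n hn y hy
end

section
/- The double series ∑_{a=1}^{∞} ∑_{b=1}^{∞} 1/(a·(a+b−1)·b) converges and its sum equals π²/3. -/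
open Real Filter

/-- Telescoping fiber sum: `∑_{b≥0} 1/((a+1)(a+b+1)(a+b+2)) = 1/(a+1)^2`. -/
lemma fiber_hasSum (a : ℕ) :
    HasSum (fun b : ℕ =>
      1 / (((a : ℝ) + 1) * ((a : ℝ) + (b : ℝ) + 1) * ((a : ℝ) + (b : ℝ) + 2)))
      (1 / ((a : ℝ) + 1) ^ 2) := by
  set g : ℕ → ℝ := fun b => 1 / ((a : ℝ) + (b : ℝ) + 1) with hg
  have key : ∀ b : ℕ,
      1 / (((a : ℝ) + 1) * ((a : ℝ) + (b : ℝ) + 1) * ((a : ℝ) + (b : ℝ) + 2)) =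
      (1 / ((a : ℝ) + 1)) * (g b - g (b + 1)) := by
    intro b
    have h1 : ((a : ℝ) + 1) ≠ 0 := by positivity
    have h2 : ((a : ℝ) + (b : ℝ) + 1) ≠ 0 := by positivity
    have h3 : ((a : ℝ) + (b : ℝ) + 2) ≠ 0 := by positivity
    have h4 : ((a : ℝ) + ((b : ℝ) + 1) + 1) ≠ 0 := by positivity
    simp only [hg, Nat.cast_add, Nat.cast_one]
    field_simp
    ring
  have htel : HasSum (fun b : ℕ => g b - g (b + 1)) (1 / ((a : ℝ) + 1)) := by
    have hnn : ∀ b : ℕ, (0:ℝ) ≤ g b - g (b + 1) := by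
      intro b
      have h2 : (0:ℝ) < (a : ℝ) + (b : ℝ) + 1 := by positivity
      have h4 : (0:ℝ) < (a : ℝ) + ((b:ℝ) + 1) + 1 := by positivity
      have : (a : ℝ) + (b : ℝ) + 1 ≤ (a : ℝ) + ((b:ℝ)+1) + 1 := by linarith
      have := one_div_le_one_div_of_le h2 this
      simpa [hg, sub_nonneg, Nat.cast_add, Nat.cast_one] using this
    rw [hasSum_iff_tendsto_nat_of_nonneg hnn]
    have hsum : ∀ n : ℕ, ∑ i ∈ Finset.range n, (g i - g (i + 1)) = g 0 - g n :=
      fun n => Finset.sum_range_sub' g n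
    simp only [hsum]
    have hlim : Tendsto g atTop (nhds 0) := by
      simp only [hg, one_div]
      apply Tendsto.comp tendsto_inv_atTop_zero
      apply tendsto_atTop_add_const_right
      apply tendsto_atTop_add_const_left
      exact tendsto_natCast_atTop_atTop
    have : Tendsto (fun n : ℕ => g 0 - g n) atTop (nhds (g 0 - 0)) :=
      (tendsto_const_nhds).sub hlim
    simpa [hg] using this
  have := htel.mul_left (1 / ((a : ℝ) + 1))
  have heq : (1 / ((a : ℝ) + 1)) * (1 / ((a : ℝ) + 1)) = 1 / ((a : ℝ) + 1) ^ 2 := by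
    rw [div_mul_div_comm]; ring_nf
  rw [heq] at this
  exact this.congr_fun fun b => key b

lemma outer_hasSum : HasSum (fun a : ℕ => 1 / ((a : ℝ) + 1) ^ 2) (π ^ 2 / 6) := by
  have h := hasSum_zeta_two
  rw [← hasSum_nat_add_iff' 1] at h
  simpa using h

/-- The asymmetric half: `∑_{a,b} 1/((a+1)(a+b+1)(a+b+2)) = π²/6`. -/
lemma half_hasSum :
    HasSum (fun p : ℕ × ℕ =>
      1 / (((p.1 : ℝ) + 1) * ((p.1 : ℝ) + (p.2 : ℝ) + 1) * ((p.1 : ℝ) + (p.2 : ℝ) + 2)))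
      (π ^ 2 / 6) := by
  set f : ℕ × ℕ → ℝ := fun p =>
    1 / (((p.1 : ℝ) + 1) * ((p.1 : ℝ) + (p.2 : ℝ) + 1) * ((p.1 : ℝ) + (p.2 : ℝ) + 2)) with hf
  have hnn : 0 ≤ f := by
    intro p; simp only [hf]; positivity
  have hsummable : Summable f := by
    rw [summable_prod_of_nonneg hnn]
    constructor
    · exact fun a => (fiber_hasSum a).summable
    · apply Summable.congr (outer_hasSum.summable)
      intro a
      exact ((fiber_hasSum a).tsum_eq).symm
  have h1 : HasSum f (∑' p, f p) := hsummable.hasSum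
  have h2 : HasSum (fun a : ℕ => 1 / ((a : ℝ) + 1) ^ 2) (∑' p, f p) :=
    h1.prod_fiberwise fun a => fiber_hasSum a
  rwa [h2.unique outer_hasSum] at h1

set_option maxHeartbeats 1000000 in
/-- The Mirzakhani volume `V_{𝔻₆}` of the moduli space of ideal hexagons:
`∑_{a,b ≥ 1} 1/(a(a+b-1)b) = π²/3`. -/
theorem hexagon_volume :
    HasSum
      (fun p : ℕ × ℕ =>
        1 / (((p.1 : ℝ) + 1) * (((p.1 : ℝ) + 1) + ((p.2 : ℝ) + 1) - 1) * ((p.2 : ℝ) + 1)))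
      (Real.pi ^ 2 / 3) := by
  have hswap0 := (Equiv.prodComm ℕ ℕ).hasSum_iff.mpr half_hasSum
  have hswap : HasSum (fun p : ℕ × ℕ =>
      1 / (((p.2 : ℝ) + 1) * ((p.2 : ℝ) + (p.1 : ℝ) + 1) * ((p.2 : ℝ) + (p.1 : ℝ) + 2)))
      (π ^ 2 / 6) := by
    refine hswap0.congr_fun fun p => ?_
    simp [Function.comp, Equiv.prodComm_apply]
  have hadd := half_hasSum.add hswap
  have key : ∀ p : ℕ × ℕ,
      1 / (((p.1 : ℝ) + 1) * (((p.1 : ℝ) + 1) + ((p.2 : ℝ) + 1) - 1) * ((p.2 : ℝ) + 1)) =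
      1 / (((p.1 : ℝ) + 1) * ((p.1 : ℝ) + (p.2 : ℝ) + 1) * ((p.1 : ℝ) + (p.2 : ℝ) + 2)) +
      1 / (((p.2 : ℝ) + 1) * ((p.2 : ℝ) + (p.1 : ℝ) + 1) * ((p.2 : ℝ) + (p.1 : ℝ) + 2)) := by
    intro ⟨a, b⟩
    have h1 : ((a : ℝ) + 1) ≠ 0 := by positivity
    have h2 : ((b : ℝ) + 1) ≠ 0 := by positivity
    have h3 : ((a : ℝ) + (b : ℝ) + 1) ≠ 0 := by positivity
    have h4 : ((a : ℝ) + (b : ℝ) + 2) ≠ 0 := by positivity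
    have h5 : ((b : ℝ) + (a : ℝ) + 1) ≠ 0 := by positivity
    have h6 : ((b : ℝ) + (a : ℝ) + 2) ≠ 0 := by positivity
    have hA : (((a : ℝ) + 1) * ((a : ℝ) + (b : ℝ) + 1) * ((a : ℝ) + (b : ℝ) + 2)) ≠ 0 :=
      mul_ne_zero (mul_ne_zero h1 h3) h4
    have hB : (((b : ℝ) + 1) * ((b : ℝ) + (a : ℝ) + 1) * ((b : ℝ) + (a : ℝ) + 2)) ≠ 0 :=
      mul_ne_zero (mul_ne_zero h2 h5) h6
    have hL : (((a : ℝ) + 1) * (((a : ℝ) + 1) + ((b : ℝ) + 1) - 1) * ((b : ℝ) + 1)) ≠ 0 := by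
      have : (((a : ℝ) + 1) + ((b : ℝ) + 1) - 1) = (a : ℝ) + (b : ℝ) + 1 := by ring
      rw [this]; exact mul_ne_zero (mul_ne_zero h1 h3) h2
    simp only
    rw [div_add_div _ _ hA hB, div_eq_div_iff hL (mul_ne_zero hA hB)]
    ring
  have : (π ^ 2 / 6 + π ^ 2 / 6 : ℝ) = π ^ 2 / 3 := by ring
  rw [this] at hadd
  exact hadd.congr_fun fun p => key p
end

section
/- The quadruple series ∑_{a=1}^{∞} ∑_{b=1}^{∞} ∑_{c=1}^{∞} ∑_{d=1}^{∞} 1/(a·(a+b−1)·(b+c−1)·(c+d−1)·d) converges and its sum equals 8π⁴/45. -/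
open Real Filter Finset Topology

noncomputable def Hh : ℕ → ℝ := fun n => ∑ i ∈ Finset.range n, 1/((i:ℝ)+1)

lemma Hh_zero : Hh 0 = 0 := rfl
lemma Hh_succ (n : ℕ) : Hh (n+1) = Hh n + 1/((n:ℝ)+1) := Finset.sum_range_succ _ _
lemma Hh_nonneg (n : ℕ) : 0 ≤ Hh n := Finset.sum_nonneg (fun i _ => by positivity)

lemma Hh_le_sqrt (n : ℕ) : Hh n ≤ 2 * Real.sqrt n := by
  induction n with
  | zero => simp [Hh_zero]
  | succ n ih =>
    rw [Hh_succ]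
    have h1 : Real.sqrt (n+1) + Real.sqrt n ≤ 2*((n:ℝ)+1) := by
      have a1 : Real.sqrt (n+1) ≤ (n:ℝ)+1 := by
        nlinarith [Real.sq_sqrt (by positivity : (0:ℝ) ≤ (n:ℝ)+1),
          Real.sqrt_nonneg ((n:ℝ)+1)]
      have a2 : Real.sqrt n ≤ (n:ℝ)+1 := by
        nlinarith [Real.sq_sqrt (by positivity : (0:ℝ) ≤ (n:ℝ)), Real.sqrt_nonneg (n:ℝ)]
      linarith
    have h2 : 1/((n:ℝ)+1) ≤ 2*(Real.sqrt (n+1) - Real.sqrt n) := by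
      have hs : (Real.sqrt (n+1) - Real.sqrt n) * (Real.sqrt (n+1) + Real.sqrt n) = 1 := by
        have := Real.sq_sqrt (by positivity : (0:ℝ) ≤ (n:ℝ)+1)
        have := Real.sq_sqrt (by positivity : (0:ℝ) ≤ (n:ℝ))
        push_cast
        nlinarith
      have hpos : (0:ℝ) < Real.sqrt (n+1) + Real.sqrt n := by
        have : (0:ℝ) < Real.sqrt (n+1) := Real.sqrt_pos.2 (by positivity)
        nlinarith [Real.sqrt_nonneg (n:ℝ)]
      rw [div_le_iff₀ (by positivity)]
      calc (1:ℝ) = (Real.sqrt (n+1) - Real.sqrt n) * (Real.sqrt (n+1) + Real.sqrt n) := hs.symm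
        _ ≤ (Real.sqrt (n+1) - Real.sqrt n) * (2*((n:ℝ)+1)) := by
            apply mul_le_mul_of_nonneg_left h1
            nlinarith [hs, hpos]
        _ = 2*(Real.sqrt (n+1) - Real.sqrt n) * ((n:ℝ)+1) := by ring
    push_cast
    push_cast at ih h2
    linarith

lemma Hh_le_cbrt (n : ℕ) : Hh n ≤ 3 * (n:ℝ) ^ ((1:ℝ)/3) := by
  induction n with
  | zero => simp [Hh_zero]
  | succ n ih =>
    rw [Hh_succ]
    set a : ℝ := ((n:ℝ)+1) ^ ((1:ℝ)/3) with ha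
    set b : ℝ := (n:ℝ) ^ ((1:ℝ)/3) with hb
    have hbn : (0:ℝ) ≤ (n:ℝ) := by positivity
    have ha3 : a^3 = (n:ℝ)+1 := by
      rw [ha, ← Real.rpow_natCast (((n:ℝ)+1) ^ ((1:ℝ)/3)) 3, ← Real.rpow_mul (by positivity)]
      norm_num
    have hb3 : b^3 = (n:ℝ) := by
      rw [hb, ← Real.rpow_natCast ((n:ℝ) ^ ((1:ℝ)/3)) 3, ← Real.rpow_mul hbn]
      norm_num
    have hapos : 0 < a := by rw [ha]; positivity
    have hbnn : 0 ≤ b := by rw [hb]; positivity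
    have hba : b ≤ a := by
      rw [ha, hb]; exact Real.rpow_le_rpow hbn (by linarith) (by norm_num)
    have ha1 : a^2 ≤ (n:ℝ)+1 := by
      have : a^2 = ((n:ℝ)+1) ^ ((2:ℝ)/3) := by
        rw [ha, ← Real.rpow_natCast (((n:ℝ)+1) ^ ((1:ℝ)/3)) 2, ← Real.rpow_mul (by positivity)]
        norm_num
      rw [this]
      calc ((n:ℝ)+1) ^ ((2:ℝ)/3) ≤ ((n:ℝ)+1) ^ (1:ℝ) :=
            Real.rpow_le_rpow_of_exponent_le (by linarith) (by norm_num)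
        _ = (n:ℝ)+1 := Real.rpow_one _
    have key : 1/((n:ℝ)+1) ≤ 3*(a - b) := by
      have hfact : (a - b) * (a^2 + a*b + b^2) = 1 := by nlinarith [ha3, hb3]
      have hS : a^2 + a*b + b^2 ≤ 3*((n:ℝ)+1) := by nlinarith
      have hSpos : 0 < a^2 + a*b + b^2 := by positivity
      rw [div_le_iff₀ (by positivity)]
      have hab : 0 ≤ a - b := by linarith
      nlinarith
    push_cast
    linarith

lemma tendsto_Hh_div (r : ℝ) (hr : 1 ≤ r) :
    Tendsto (fun N : ℕ => Hh N / ((N:ℝ) + r)) atTop (𝓝 0) := by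
  apply squeeze_zero' (g := fun N : ℕ => 2 * ((N:ℝ) ^ (-(1/2:ℝ))))
  · filter_upwards with N
    have h1 : (0:ℝ) < (N:ℝ) + r := by positivity
    exact div_nonneg (Hh_nonneg N) h1.le
  · filter_upwards [eventually_ge_atTop 1] with N hN
    have hN1 : (1:ℝ) ≤ (N:ℝ) := by exact_mod_cast hN
    have hNpos : (0:ℝ) < (N:ℝ) := by linarith
    have h1 : Hh N / ((N:ℝ) + r) ≤ 2 * Real.sqrt N / (N:ℝ) := by
      apply div_le_div₀ (by positivity) (Hh_le_sqrt N) (by linarith) (by linarith)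
    refine h1.trans ?_
    have hs : Real.sqrt N = (N:ℝ) ^ ((1/2:ℝ)) := Real.sqrt_eq_rpow _
    rw [hs, mul_div_assoc]
    gcongr 2 * ?_
    have heq : (N:ℝ) ^ ((1/2:ℝ)) / (N:ℝ) = (N:ℝ) ^ (-(1/2:ℝ)) := by
      rw [show (-(1/2:ℝ)) = (1/2:ℝ) - 1 by norm_num, Real.rpow_sub hNpos, Real.rpow_one]
    rw [heq]
  · have h0 : Tendsto (fun x : ℝ => x ^ (-(1/2:ℝ))) atTop (𝓝 0) :=
      tendsto_rpow_neg_atTop (by norm_num)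
    simpa using (h0.comp tendsto_natCast_atTop_atTop).const_mul (2:ℝ)

lemma sum_range_add' (a : ℕ → ℝ) (N m : ℕ) :
    ∑ k ∈ Finset.range (N+m), a k = ∑ k ∈ Finset.range N, a k + ∑ k ∈ Finset.range m, a (N+k) := by
  induction m with
  | zero => simp
  | succ m ih => rw [← Nat.add_assoc, Finset.sum_range_succ, ih, Finset.sum_range_succ]; ring

lemma sum_shift_sub (a : ℕ → ℝ) (N m : ℕ) :
    ∑ k ∈ Finset.range N, (a k - a (k+m)) =
      ∑ k ∈ Finset.range m, a k - ∑ k ∈ Finset.range m, a (N+k) := by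
  have h1 := sum_range_add' a N m
  have h2 := sum_range_add' a m N
  rw [Finset.sum_sub_distrib]
  have h3 : ∑ k ∈ Finset.range N, a (k+m) = ∑ k ∈ Finset.range N, a (m+k) := by
    apply Finset.sum_congr rfl; intro x _; rw [Nat.add_comm]
  rw [h3]
  have : (N+m) = (m+N) := Nat.add_comm _ _
  rw [this] at h1
  linarith

lemma L3 (m : ℕ) (hm : 0 < m) :
    HasSum (fun k : ℕ => 1/(((k:ℝ)+1)*((k:ℝ)+1+(m:ℝ)))) (Hh m/(m:ℝ)) := by
  have hmR : (0:ℝ) < (m:ℝ) := by exact_mod_cast hm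
  rw [hasSum_iff_tendsto_nat_of_nonneg (fun k => by positivity)]
  have key : ∀ N : ℕ, ∑ k ∈ Finset.range N, 1/(((k:ℝ)+1)*((k:ℝ)+1+(m:ℝ))) =
      (Hh m - ∑ k ∈ Finset.range m, 1/((N:ℝ)+(k:ℝ)+1)) / (m:ℝ) := by
    intro N
    have hpt : ∀ k : ℕ, 1/(((k:ℝ)+1)*((k:ℝ)+1+(m:ℝ))) =
        (1/((k:ℝ)+1) - 1/(((k+m:ℕ):ℝ)+1)) / (m:ℝ) := by
      intro k
      have h1 : ((k:ℝ)+1) ≠ 0 := by positivity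
      have h2 : (((k+m:ℕ):ℝ)+1) ≠ 0 := by positivity
      have h3 : ((m:ℝ)) ≠ 0 := ne_of_gt hmR
      field_simp
      push_cast
      ring
    calc ∑ k ∈ Finset.range N, 1/(((k:ℝ)+1)*((k:ℝ)+1+(m:ℝ)))
        = (∑ k ∈ Finset.range N, ((fun j:ℕ => 1/((j:ℝ)+1)) k - (fun j:ℕ => 1/((j:ℝ)+1)) (k+m))) / (m:ℝ) := by
          rw [Finset.sum_div]; exact Finset.sum_congr rfl (fun k _ => hpt k)
      _ = (Hh m - ∑ k ∈ Finset.range m, 1/((N:ℝ)+(k:ℝ)+1)) / (m:ℝ) := by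
          rw [sum_shift_sub]
          congr 2
          apply Finset.sum_congr rfl; intro x _; push_cast; ring_nf
  simp only [key]
  have htail : Tendsto (fun N : ℕ => ∑ k ∈ Finset.range m, 1/((N:ℝ)+(k:ℝ)+1)) atTop (𝓝 0) := by
    have : Tendsto (fun N : ℕ => ∑ k ∈ Finset.range m, 1/((N:ℝ)+(k:ℝ)+1)) atTop
        (𝓝 (∑ k ∈ Finset.range m, 0)) := by
      apply tendsto_finset_sum
      intro k _
      have h2 : Tendsto (fun N : ℕ => ((N:ℝ)+((k:ℝ)+1))⁻¹) atTop (𝓝 0) :=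
        (tendsto_atTop_add_const_right atTop ((k:ℝ)+1) tendsto_natCast_atTop_atTop).inv_tendsto_atTop
      simpa [one_div, add_assoc] using h2
    simpa using this
  have := ((tendsto_const_nhds (x := Hh m)).sub htail).div_const (m:ℝ)
  simpa using this

lemma L4 (m : ℕ) {S : ℝ} (hS : HasSum (fun k : ℕ => 1/(((k:ℝ)+1)*((k:ℝ)+1+(m:ℝ)))) S) :
    HasSum (fun k : ℕ => Hh (k+1) * (1/((k:ℝ)+1+(m:ℝ)) - 1/((k:ℝ)+2+(m:ℝ)))) S := by
  have hnn : ∀ k : ℕ, 0 ≤ Hh (k+1) * (1/((k:ℝ)+1+(m:ℝ)) - 1/((k:ℝ)+2+(m:ℝ))) := by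
    intro k
    apply mul_nonneg (Hh_nonneg _)
    rw [sub_nonneg]
    apply one_div_le_one_div_of_le (by positivity)
    linarith
  rw [hasSum_iff_tendsto_nat_of_nonneg hnn]
  have key : ∀ N : ℕ, ∑ k ∈ Finset.range N, Hh (k+1) * (1/((k:ℝ)+1+(m:ℝ)) - 1/((k:ℝ)+2+(m:ℝ)))
      = ∑ k ∈ Finset.range N, 1/(((k:ℝ)+1)*((k:ℝ)+1+(m:ℝ))) - Hh N / ((N:ℝ)+1+(m:ℝ)) := by
    intro N
    induction N with
    | zero => simp [Hh]
    | succ N ih =>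
      rw [Finset.sum_range_succ, ih, Finset.sum_range_succ, Hh_succ]
      have e1 : ((N+1:ℕ):ℝ) = (N:ℝ)+1 := by push_cast; ring
      rw [e1]
      have h1 : ((N:ℝ)+1) ≠ 0 := by positivity
      have h2 : ((N:ℝ)+1+(m:ℝ)) ≠ 0 := by positivity
      have h3 : ((N:ℝ)+2+(m:ℝ)) ≠ 0 := by positivity
      field_simp
      ring
  simp only [key]
  have h1 := hS.tendsto_sum_nat
  have h2 : Tendsto (fun N : ℕ => Hh N / ((N:ℝ)+1+(m:ℝ))) atTop (𝓝 0) := by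
    have := tendsto_Hh_div (1+(m:ℝ)) (le_add_of_nonneg_right (Nat.cast_nonneg m))
    simpa [add_assoc] using this
  simpa using h1.sub h2

lemma z2' : HasSum (fun n : ℕ => 1/((n:ℝ)+1)^2) (π^2/6) := by
  have h := hasSum_zeta_two
  have h2 := (hasSum_nat_add_iff (f := fun n : ℕ => (1:ℝ)/(n:ℝ)^2) 1).2 (by simpa using h)
  simpa [Nat.cast_add] using h2

lemma z4' : HasSum (fun n : ℕ => 1/((n:ℝ)+1)^4) (π^4/90) := by
  have h := hasSum_zeta_four
  have h2 := (hasSum_nat_add_iff (f := fun n : ℕ => (1:ℝ)/(n:ℝ)^4) 1).2 (by simpa using h)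
  simpa [Nat.cast_add] using h2

lemma hasSum_prod_of_nonneg {ι κ : Type*} {f : ι × κ → ℝ} (hf : ∀ p, 0 ≤ f p)
    {g : ι → ℝ} {S : ℝ} (hrow : ∀ b, HasSum (fun c => f (b, c)) (g b))
    (houter : HasSum g S) : HasSum f S := by
  have hgeq : (fun b => ∑' c, f (b, c)) = g := funext fun b => (hrow b).tsum_eq
  have hsumm : Summable f := by
    rw [summable_prod_of_nonneg hf]
    exact ⟨fun b => (hrow b).summable, by rw [hgeq]; exact houter.summable⟩
  have h1 : HasSum f (∑' p, f p) := hsumm.hasSum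
  have h2 : HasSum g (∑' p, f p) := h1.prod_fiberwise hrow
  rwa [h2.unique houter] at h1

noncomputable def Ffull : ℕ × ℕ → ℝ := fun p => 1/(((p.1:ℝ)+1)^2*((p.2:ℝ)+1)^2)

lemma Ffull_hasSum : HasSum Ffull (π^2/6 * (π^2/6)) := by
  apply hasSum_prod_of_nonneg (fun p => by unfold Ffull; positivity)
    (g := fun j : ℕ => 1/((j:ℝ)+1)^2 * (π^2/6))
  · intro b
    have := z2'.mul_left (1/((b:ℝ)+1)^2)
    convert this using 2 with c
    · rfl
    unfold Ffull
    simp only []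
    rw [div_mul_div_comm, one_mul]
  · exact z2'.mul_right _

noncomputable def Pval : ℝ := ∑' p : ℕ × ℕ, (if p.1 < p.2 then Ffull p else 0)

lemma summable_Flt : Summable (fun p : ℕ × ℕ => if p.1 < p.2 then Ffull p else 0) := by
  apply Summable.of_nonneg_of_le (fun p => ?_) (fun p => ?_) Ffull_hasSum.summable <;>
    split
  · unfold Ffull; positivity
  · rfl
  · rfl
  · unfold Ffull; positivity

lemma Flt_hasSum : HasSum (fun p : ℕ × ℕ => if p.1 < p.2 then Ffull p else 0) Pval :=
  summable_Flt.hasSum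

lemma Fgt_hasSum : HasSum (fun p : ℕ × ℕ => if p.2 < p.1 then Ffull p else 0) Pval := by
  have h := (Equiv.prodComm ℕ ℕ).hasSum_iff.2 Flt_hasSum
  convert h using 1
  funext p
  rcases p with ⟨a, b⟩
  show (if b < a then Ffull (a, b) else 0) = (if b < a then Ffull (b, a) else 0)
  simp only [Equiv.prodComm_apply, Function.comp, Prod.swap_prod_mk, Ffull]
  split_ifs <;> [ring; rfl]

lemma Fdiag_hasSum : HasSum (fun p : ℕ × ℕ => if p.1 = p.2 then Ffull p else 0) (π^4/90) := by
  have hinj : Function.Injective (fun n : ℕ => (n, n)) := by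
    intro a b h
    simpa [Prod.mk.injEq] using h
  rw [← Function.Injective.hasSum_iff hinj (by
    rintro ⟨a,b⟩ hp
    have hab : ¬ a = b := by
      intro h
      exact hp ⟨a, by simp [h]⟩
    simp [hab])]
  convert z4' using 1
  funext n
  simp only [Function.comp, Ffull, if_true, eq_self_iff_true]
  rw [div_eq_div_iff (by positivity) (by positivity)]
  ring

lemma Pval_eq : Pval = (π^4/36 - π^4/90)/2 := by
  have h2 : HasSum Ffull (Pval + (π^4/90 + Pval)) := by
    have hs := Flt_hasSum.add (Fdiag_hasSum.add Fgt_hasSum)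
    convert hs using 1
    funext p
    show Ffull p = (if p.1 < p.2 then Ffull p else 0) +
      ((if p.1 = p.2 then Ffull p else 0) + (if p.2 < p.1 then Ffull p else 0))
    split_ifs <;> first | omega | ring
  have huniq := h2.unique Ffull_hasSum
  have hpi : π^2/6 * (π^2/6) = π^4/36 := by ring
  rw [hpi] at huniq
  linarith

noncomputable def fP : ℕ × ℕ → ℝ := fun p => 1/(((p.2:ℝ)+1)^2*((p.1:ℝ)+(p.2:ℝ)+2)^2)

lemma fP_hasSum : HasSum fP Pval := by
  have hinj : Function.Injective (fun p : ℕ × ℕ => (p.2, p.1+p.2+1)) := by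
    rintro ⟨a,b⟩ ⟨c,d⟩ h
    simp only [Prod.mk.injEq] at h ⊢
    omega
  have hout : ∀ p ∉ Set.range (fun p : ℕ × ℕ => (p.2, p.1+p.2+1)),
      (if p.1 < p.2 then Ffull p else 0) = 0 := by
    rintro ⟨a,b⟩ hp
    have hab : ¬ a < b := by
      intro h
      exact hp ⟨(b - a - 1, a), by dsimp only; rw [Prod.mk.injEq]; omega⟩
    simp [hab]
  have h := (Function.Injective.hasSum_iff hinj hout).2 Flt_hasSum
  convert h using 1
  funext p
  rcases p with ⟨a, b⟩
  simp only [Function.comp, fP, Ffull]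
  rw [if_pos (by omega : b < a + b + 1)]
  have : (((a+b+1 : ℕ)):ℝ) = (a:ℝ)+(b:ℝ)+1 := by push_cast; ring
  rw [this]
  ring_nf

noncomputable def fE : ℕ × ℕ → ℝ :=
  fun p => 1/(((p.1:ℝ)+1)^2*((p.2:ℝ)+1)*((p.1:ℝ)+(p.2:ℝ)+2))

noncomputable def Eterm : ℕ → ℝ := fun m => Hh (m+1)/((m:ℝ)+1)^3

lemma fE_nonneg (p : ℕ × ℕ) : 0 ≤ fE p := by unfold fE; positivity

lemma fE_row (m : ℕ) : HasSum (fun n => fE (m, n)) (Eterm m) := by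
  have h := (L3 (m+1) (Nat.succ_pos m)).mul_left (1/((m:ℝ)+1)^2)
  have hc : ((m+1:ℕ):ℝ) = (m:ℝ)+1 := by push_cast; ring
  rw [hc] at h
  have e1 : (fun k : ℕ => 1/((m:ℝ)+1)^2 * (1/(((k:ℝ)+1)*((k:ℝ)+1+((m:ℝ)+1)))))
      = fun n : ℕ => fE (m, n) := by
    funext k
    unfold fE
    rw [div_mul_div_comm, one_mul]
    ring_nf
  have e2 : 1/((m:ℝ)+1)^2 * (Hh (m+1)/((m:ℝ)+1)) = Eterm m := by
    unfold Eterm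
    rw [div_mul_div_comm, one_mul]
    ring_nf
  rw [e1, e2] at h
  exact h

lemma summable_fE : Summable fE := by
  apply Summable.of_nonneg_of_le fE_nonneg (fun p => ?_) Ffull_hasSum.summable
  unfold fE Ffull
  rw [div_le_div_iff₀ (by positivity) (by positivity), one_mul, one_mul]
  have h1 : ((p.2:ℝ)+1) ≤ ((p.1:ℝ)+(p.2:ℝ)+2) := by
    linarith [Nat.cast_nonneg (α := ℝ) p.1]
  have h2 : (0:ℝ) ≤ ((p.1:ℝ)+1)^2 * ((p.2:ℝ)+1) := by positivity
  nlinarith [mul_nonneg h2 (sub_nonneg.2 h1)]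

lemma Eterm_hasSum : HasSum Eterm (π^4/72) := by
  have h1 : HasSum fE (∑' p, fE p) := summable_fE.hasSum
  have h2 : HasSum Eterm (∑' p, fE p) := h1.prod_fiberwise fE_row
  -- symmetry : fE p + fE p.swap = Ffull p
  have h3 : HasSum (fun p : ℕ × ℕ => fE p + fE p.swap) (∑' p, fE p + ∑' p, fE p) := by
    apply h1.add
    exact ((Equiv.prodComm ℕ ℕ).hasSum_iff.2 h1)
  have h4 : (fun p : ℕ × ℕ => fE p + fE p.swap) = Ffull := by
    funext p
    rcases p with ⟨m, n⟩
    unfold fE Ffull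
    simp only [Prod.swap_prod_mk]
    rw [div_add_div _ _ (by positivity) (by positivity), div_eq_div_iff (by positivity) (by positivity)]
    ring
  rw [h4] at h3
  have h5 := h3.unique Ffull_hasSum
  have : ∑' p, fE p = π^4/72 := by nlinarith [Real.pi_pos]
  rwa [this] at h2

noncomputable def Qterm : ℕ → ℝ := fun j => (Hh (j+1)/((j:ℝ)+1))^2

lemma summable_Qterm : Summable Qterm := by
  have hbound : ∀ j : ℕ, Qterm j ≤ 9 * (1/((j:ℝ)+1)^((4:ℝ)/3)) := by
    intro j
    unfold Qterm
    have h1 : Hh (j+1) ≤ 3 * ((j:ℝ)+1) ^ ((1:ℝ)/3) := by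
      have := Hh_le_cbrt (j+1)
      rwa [show (((j+1:ℕ)):ℝ) = (j:ℝ)+1 by push_cast; ring] at this
    have hp : (0:ℝ) < (j:ℝ)+1 := by positivity
    have h2 : (Hh (j+1))^2 ≤ 9 * ((j:ℝ)+1)^((2:ℝ)/3) := by
      have hn := Hh_nonneg (j+1)
      have h3 : (Hh (j+1))^2 ≤ (3 * ((j:ℝ)+1) ^ ((1:ℝ)/3))^2 := by
        apply pow_le_pow_left₀ hn h1
      refine h3.trans_eq ?_
      rw [mul_pow, ← Real.rpow_natCast (((j:ℝ)+1) ^ ((1:ℝ)/3)) 2, ← Real.rpow_mul hp.le]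
      norm_num
    rw [div_pow, div_le_iff₀ (by positivity), mul_assoc]
    calc (Hh (j+1))^2 ≤ 9 * ((j:ℝ)+1)^((2:ℝ)/3) := h2
      _ = 9 * (1/((j:ℝ)+1)^((4:ℝ)/3) * ((j:ℝ)+1)^2) := by
          rw [one_div, ← Real.rpow_neg hp.le, ← Real.rpow_natCast ((j:ℝ)+1) 2,
            ← Real.rpow_add hp]
          norm_num
  apply Summable.of_nonneg_of_le (fun j => by unfold Qterm; positivity) hbound
  apply Summable.mul_left
  have h := (Real.summable_one_div_nat_rpow (p := (4:ℝ)/3)).2 (by norm_num)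
  have h2 := (summable_nat_add_iff 1).2 h
  convert h2 using 2 with n
  · rfl
  rw [show (((n+1:ℕ)):ℝ) = (n:ℝ)+1 by push_cast; ring]

noncomputable def Qval : ℝ := ∑' j, Qterm j
lemma Qterm_hasSum : HasSum Qterm Qval := summable_Qterm.hasSum

noncomputable def fB : ℕ × ℕ → ℝ :=
  fun p => Hh (p.1+1)/(((p.1:ℝ)+1)*((p.2:ℝ)+1)*((p.1:ℝ)+(p.2:ℝ)+2))

lemma fB_nonneg (p : ℕ × ℕ) : 0 ≤ fB p := by
  unfold fB; exact div_nonneg (Hh_nonneg _) (by positivity)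

lemma fB_row (j : ℕ) : HasSum (fun k => fB (j, k)) (Qterm j) := by
  have h := (L3 (j+1) (Nat.succ_pos j)).mul_left (Hh (j+1)/((j:ℝ)+1))
  rw [show (((j+1:ℕ)):ℝ) = (j:ℝ)+1 by push_cast; ring] at h
  have e1 : (fun k : ℕ => Hh (j+1)/((j:ℝ)+1) * (1/(((k:ℝ)+1)*((k:ℝ)+1+((j:ℝ)+1)))))
      = fun k : ℕ => fB (j, k) := by
    funext k
    unfold fB
    rw [div_mul_div_comm]
    ring_nf
  have e2 : Hh (j+1)/((j:ℝ)+1) * (Hh (j+1)/((j:ℝ)+1)) = Qterm j := by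
    unfold Qterm; ring
  rw [e1, e2] at h
  exact h

lemma fB_hasSum : HasSum fB Qval :=
  hasSum_prod_of_nonneg fB_nonneg fB_row Qterm_hasSum

-- C block
noncomputable def Psi : ℕ × ℕ → ℝ :=
  fun p => if p.2 < p.1 then Hh (p.1+1)/(((p.2:ℝ)+1)*((p.1:ℝ)+1)^2) else 0

lemma Psi_nonneg (p : ℕ × ℕ) : 0 ≤ Psi p := by
  unfold Psi; split
  · exact div_nonneg (Hh_nonneg _) (by positivity)
  · rfl

lemma Psi_row (n : ℕ) : HasSum (fun j => Psi (n, j)) (Qterm n - Eterm n) := by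
  have hfin : ∀ j ∉ Finset.range n, Psi (n, j) = 0 := by
    intro j hj
    unfold Psi
    rw [if_neg]
    simpa using hj
  have h : HasSum (fun j => Psi (n, j)) (∑ j ∈ Finset.range n, Psi (n, j)) :=
    hasSum_sum_of_ne_finset_zero hfin
  have e : ∑ j ∈ Finset.range n, Psi (n, j) = Qterm n - Eterm n := by
    have e1 : ∀ j ∈ Finset.range n, Psi (n, j) = (Hh (n+1)/((n:ℝ)+1)^2) * (1/((j:ℝ)+1)) := by
      intro j hj
      unfold Psi
      rw [if_pos (Finset.mem_range.1 hj)]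
      rw [div_mul_div_comm]
      ring_nf
    rw [Finset.sum_congr rfl e1, ← Finset.mul_sum]
    have : ∑ j ∈ Finset.range n, 1/((j:ℝ)+1) = Hh n := rfl
    rw [this]
    have hn : Hh n = Hh (n+1) - 1/((n:ℝ)+1) := by rw [Hh_succ]; ring
    rw [hn]
    unfold Qterm Eterm
    field_simp
  rwa [e] at h

lemma Psi_hasSum : HasSum Psi (Qval - π^4/72) :=
  hasSum_prod_of_nonneg Psi_nonneg Psi_row (Qterm_hasSum.sub Eterm_hasSum)

noncomputable def psi : ℕ × ℕ → ℝ :=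
  fun p => Hh (p.1+p.2+2)/(((p.1:ℝ)+1)*((p.1:ℝ)+(p.2:ℝ)+2)^2)

lemma psi_hasSum : HasSum psi (Qval - π^4/72) := by
  have hinj : Function.Injective (fun p : ℕ × ℕ => (p.1+p.2+1, p.1)) := by
    rintro ⟨a,b⟩ ⟨c,d⟩ h
    simp only [Prod.mk.injEq] at h ⊢
    omega
  have hout : ∀ p ∉ Set.range (fun p : ℕ × ℕ => (p.1+p.2+1, p.1)), Psi p = 0 := by
    rintro ⟨a,b⟩ hp
    have hab : ¬ b < a := by
      intro h
      exact hp ⟨(b, a - b - 1), by dsimp only; rw [Prod.mk.injEq]; omega⟩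
    unfold Psi
    rw [if_neg hab]
  have h := (Function.Injective.hasSum_iff hinj hout).2 Psi_hasSum
  convert h using 1
  funext p
  rcases p with ⟨a, b⟩
  simp only [Function.comp, psi, Psi]
  rw [if_pos (by omega : a < a + b + 1)]
  have h1 : (((a+b+1 : ℕ)):ℝ) = (a:ℝ)+(b:ℝ)+1 := by push_cast; ring
  rw [h1, show a+b+1+1 = a+b+2 by omega]
  ring_nf

noncomputable def fC : ℕ × ℕ → ℝ :=
  fun p => Hh (p.1+p.2+2)/(((p.1:ℝ)+1)*((p.2:ℝ)+1)*((p.1:ℝ)+(p.2:ℝ)+2))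

lemma fC_hasSum : HasSum fC (2*(Qval - π^4/72)) := by
  have h2 : HasSum (fun p : ℕ × ℕ => psi p + psi p.swap)
      ((Qval - π^4/72) + (Qval - π^4/72)) :=
    psi_hasSum.add ((Equiv.prodComm ℕ ℕ).hasSum_iff.2 psi_hasSum)
  have e : (fun p : ℕ × ℕ => psi p + psi p.swap) = fC := by
    funext p
    rcases p with ⟨a, b⟩
    simp only [psi, fC, Prod.swap_prod_mk]
    rw [show b+a+2 = a+b+2 by omega]
    rw [div_add_div _ _ (by positivity) (by positivity),
      div_eq_div_iff (by positivity) (by positivity)]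
    push_cast
    ring
  rw [e] at h2
  convert h2 using 1
  ring

noncomputable def uu (j N : ℕ) : ℝ :=
  ∑ t ∈ Finset.range N, 1/(((t:ℝ)+1)*((t:ℝ)+1+((j:ℝ)+1)))

lemma uu_succ (j N : ℕ) : uu j (N+1) = uu j N + 1/(((N:ℝ)+1)*((N:ℝ)+1+((j:ℝ)+1))) :=
  Finset.sum_range_succ _ _

lemma uu_nonneg (j N : ℕ) : 0 ≤ uu j N := Finset.sum_nonneg (fun t _ => by positivity)

lemma uu_tendsto (j : ℕ) :
    Tendsto (fun N => uu j N) atTop (𝓝 (Hh (j+1)/((j:ℝ)+1))) := by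
  have h := (L3 (j+1) (Nat.succ_pos j)).tendsto_sum_nat
  rw [show (((j+1:ℕ)):ℝ) = (j:ℝ)+1 by push_cast; ring] at h
  exact h

lemma Hh_split (j k : ℕ) :
    Hh (j+k+2) = Hh (j+1) + Hh (k+1) - ((j:ℝ)+1) * uu j (k+1) := by
  induction k with
  | zero =>
    rw [show j+0+2 = (j+1)+1 by omega, Hh_succ (j+1), uu_succ, show uu j 0 = 0 from rfl]
    rw [show Hh (0+1) = Hh 0 + 1/((0:ℕ):ℝ)+1 by rw [Hh_succ]; norm_num,
      show Hh 0 = 0 from rfl]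
    have h1 : ((j:ℝ)+1+1) ≠ 0 := by positivity
    push_cast
    field_simp
    ring
  | succ k ih =>
    rw [show j+(k+1)+2 = (j+k+2)+1 by omega, Hh_succ, ih, uu_succ j (k+1),
      Hh_succ (k+1)]
    have h1 : ((k:ℝ)+1+1) ≠ 0 := by positivity
    have h2 : ((j:ℝ)+(k:ℝ)+2+1) ≠ 0 := by positivity
    have e1 : (((j+k+2:ℕ)):ℝ) = (j:ℝ)+(k:ℝ)+2 := by push_cast; ring
    have e2 : (((k+1:ℕ)):ℝ) = (k:ℝ)+1 := by push_cast; ring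
    rw [e1, e2]
    field_simp
    ring

noncomputable def fD : ℕ × ℕ → ℝ := fun p => fB p + fB p.swap - fC p

lemma fD_hasSum : HasSum fD (π^4/36) := by
  have h := (fB_hasSum.add ((Equiv.prodComm ℕ ℕ).hasSum_iff.2 fB_hasSum)).sub fC_hasSum
  have e : fD = fun b : ℕ × ℕ => fB b + (fB ∘ ⇑(Equiv.prodComm ℕ ℕ)) b - fC b := by
    funext p
    simp [fD, Function.comp, Equiv.prodComm_apply]
  rw [e]
  convert h using 1
  · rfl
  ring

lemma fD_eq (j k : ℕ) : fD (j, k) = uu j (k+1) * (uu j (k+1) - uu j k) := by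
  have hd : uu j (k+1) - uu j k = 1/(((k:ℝ)+1)*((k:ℝ)+1+((j:ℝ)+1))) := by
    rw [uu_succ]; ring
  unfold fD fB fC
  simp only [Prod.swap_prod_mk]
  rw [Hh_split j k, hd]
  have h1 : ((j:ℝ)+1) ≠ 0 := by positivity
  have h2 : ((k:ℝ)+1) ≠ 0 := by positivity
  have h3 : ((j:ℝ)+(k:ℝ)+2) ≠ 0 := by positivity
  have h4 : ((k:ℝ)+1+((j:ℝ)+1)) ≠ 0 := by positivity
  field_simp
  ring

noncomputable def vv : ℕ → ℝ := fun j => ∑' k, fP (j, k)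

lemma fP_row_summable (j : ℕ) : Summable (fun k => fP (j, k)) := by
  apply Summable.of_nonneg_of_le (fun k => by unfold fP; positivity) (fun k => ?_) z2'.summable
  unfold fP
  rw [div_le_div_iff₀ (by positivity) (by positivity), one_mul, one_mul]
  have h1 : (1:ℝ) ≤ ((j:ℝ)+(k:ℝ)+2)^2 := by nlinarith [Nat.cast_nonneg (α := ℝ) j, Nat.cast_nonneg (α := ℝ) k]
  nlinarith [sq_nonneg ((k:ℝ)+1)]

lemma vv_hasSum : HasSum vv Pval :=
  fP_hasSum.prod_fiberwise (fun j => (fP_row_summable j).hasSum)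

lemma fD_row (j : ℕ) : HasSum (fun k => fD (j, k)) (Qterm j/2 + vv j/2) := by
  have part1 : HasSum (fun k => (uu j (k+1)^2 - uu j k^2)/2) (Qterm j/2) := by
    have hnn : ∀ k, 0 ≤ (uu j (k+1)^2 - uu j k^2)/2 := by
      intro k
      have hpos : (0:ℝ) ≤ 1/(((k:ℝ)+1)*((k:ℝ)+1+((j:ℝ)+1))) := by positivity
      have : uu j k ≤ uu j (k+1) := by rw [uu_succ]; linarith
      have h0 := uu_nonneg j k
      nlinarith
    rw [hasSum_iff_tendsto_nat_of_nonneg hnn]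
    have key : ∀ N, ∑ k ∈ Finset.range N, (uu j (k+1)^2 - uu j k^2)/2 = uu j N^2/2 := by
      intro N
      rw [← Finset.sum_div, Finset.sum_range_sub (fun k => uu j k^2)]
      simp [show uu j 0 = 0 from rfl]
    simp only [key]
    have := ((uu_tendsto j).mul (uu_tendsto j)).div_const 2
    unfold Qterm
    convert this using 2 <;> ring
  have part2 : HasSum (fun k => (uu j (k+1) - uu j k)^2/2) (vv j/2) := by
    have h := ((fP_row_summable j).hasSum).div_const 2
    have e : (fun k => fP (j, k)/2) = fun k => (uu j (k+1) - uu j k)^2/2 := by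
      funext k
      have hd : uu j (k+1) - uu j k = 1/(((k:ℝ)+1)*((k:ℝ)+1+((j:ℝ)+1))) := by
        rw [uu_succ]; ring
      rw [hd]
      unfold fP
      rw [div_pow, one_pow]
      congr 2
      ring
    rw [e] at h
    exact h
  have hsum := part1.add part2
  have e2 : (fun k => (uu j (k+1)^2 - uu j k^2)/2 + (uu j (k+1) - uu j k)^2/2)
      = fun k => fD (j, k) := by
    funext k
    rw [fD_eq]
    ring
  rwa [e2] at hsum

lemma Qval_eq : Qval = 17*π^4/360 := by
  have h1 : HasSum (fun j => Qterm j/2 + vv j/2) (Qval/2 + Pval/2) :=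
    (Qterm_hasSum.div_const 2).add (vv_hasSum.div_const 2)
  have h2 : HasSum (fun j => Qterm j/2 + vv j/2) (π^4/36) :=
    fD_hasSum.prod_fiberwise fD_row
  have := h1.unique h2
  have hp := Pval_eq
  linarith

noncomputable def phi : ℕ × ℕ → ℝ :=
  fun p => Hh (p.1+1) * Hh (p.2+1) /
    (((p.1:ℝ)+1)*((p.1:ℝ)+(p.2:ℝ)+2)*((p.1:ℝ)+(p.2:ℝ)+3))

lemma phi_nonneg (p : ℕ × ℕ) : 0 ≤ phi p := by
  unfold phi
  exact div_nonneg (mul_nonneg (Hh_nonneg _) (Hh_nonneg _)) (by positivity)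

lemma phi_row (j : ℕ) : HasSum (fun k => phi (j, k)) (Qterm j) := by
  have hL3 := L3 (j+1) (Nat.succ_pos j)
  have h := (L4 (j+1) hL3).mul_left (Hh (j+1)/((j:ℝ)+1))
  rw [show (((j+1:ℕ)):ℝ) = (j:ℝ)+1 by push_cast; ring] at h
  have e1 : (fun k : ℕ => Hh (j+1)/((j:ℝ)+1) *
      (Hh (k+1) * (1/((k:ℝ)+1+((j:ℝ)+1)) - 1/((k:ℝ)+2+((j:ℝ)+1)))))
      = fun k : ℕ => phi (j, k) := by
    funext k
    unfold phi
    have h1 : ((k:ℝ)+1+((j:ℝ)+1)) ≠ 0 := by positivity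
    have h2 : ((k:ℝ)+2+((j:ℝ)+1)) ≠ 0 := by positivity
    have h3 : ((j:ℝ)+1) ≠ 0 := by positivity
    have h4 : ((j:ℝ)+(k:ℝ)+2) ≠ 0 := by positivity
    have h5 : ((j:ℝ)+(k:ℝ)+3) ≠ 0 := by positivity
    field_simp
    ring
  have e2 : Hh (j+1)/((j:ℝ)+1) * (Hh (j+1)/((j:ℝ)+1)) = Qterm j := by
    unfold Qterm; ring
  rw [e1, e2] at h
  exact h

lemma phi_hasSum : HasSum phi Qval :=
  hasSum_prod_of_nonneg phi_nonneg phi_row Qterm_hasSum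

noncomputable def fT : ℕ × ℕ → ℝ :=
  fun p => Hh (p.1+1) * Hh (p.2+1) /
    (((p.1:ℝ)+1)*((p.2:ℝ)+1)*((p.1:ℝ)+(p.2:ℝ)+3))

lemma fT_hasSum : HasSum fT (17*π^4/180) := by
  have h := phi_hasSum.add ((Equiv.prodComm ℕ ℕ).hasSum_iff.2 phi_hasSum)
  have e : (fun p : ℕ × ℕ => phi p + (phi ∘ ⇑(Equiv.prodComm ℕ ℕ)) p) = fT := by
    funext p
    rcases p with ⟨j, k⟩
    simp only [Function.comp, Equiv.prodComm_apply, Prod.swap_prod_mk, phi, fT]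
    rw [div_add_div _ _ (by positivity) (by positivity),
      div_eq_div_iff (by positivity) (by positivity)]
    ring
  rw [e] at h
  have : Qval + Qval = 17*π^4/180 := by rw [Qval_eq]; ring
  rwa [this] at h

noncomputable def gg : ℕ → ℝ := fun b => if b = 0 then π^2/6 else Hh b/(b:ℝ)

lemma gg_nonneg (b : ℕ) : 0 ≤ gg b := by
  unfold gg; split
  · positivity
  · exact div_nonneg (Hh_nonneg _) (by positivity)

lemma gg_hasSum (b : ℕ) :
    HasSum (fun a : ℕ => 1/(((a:ℝ)+1)*((a:ℝ)+(b:ℝ)+1))) (gg b) := by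
  rcases Nat.eq_zero_or_pos b with hb | hb
  · subst hb
    unfold gg
    simp only [if_pos rfl, Nat.cast_zero]
    have e : ∀ a : ℕ, 1/(((a:ℝ)+1)*((a:ℝ)+0+1)) = 1/((a:ℝ)+1)^2 := by
      intro a
      rw [sq]
      norm_num
    simp only [e]
    exact z2'
  · unfold gg
    rw [if_neg (Nat.pos_iff_ne_zero.1 hb)]
    have h := L3 b hb
    have e : ∀ a : ℕ, 1/(((a:ℝ)+1)*((a:ℝ)+(b:ℝ)+1)) = 1/(((a:ℝ)+1)*((a:ℝ)+1+(b:ℝ))) := by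
      intro a
      ring_nf
    simp only [e]
    exact h

-- the double sum function after summing over a and d
noncomputable def e2 : ℕ × ℕ → ℝ := fun p => gg p.1 * gg p.2 / ((p.1:ℝ)+(p.2:ℝ)+1)

lemma e2_nonneg (p : ℕ × ℕ) : 0 ≤ e2 p := by
  unfold e2
  exact div_nonneg (mul_nonneg (gg_nonneg _) (gg_nonneg _)) (by positivity)

lemma e00_hasSum : HasSum (fun p : ℕ × ℕ => if p = (0,0) then e2 p else 0)
    (π^2/6 * (π^2/6)) := by
  have h : e2 (0,0) = π^2/6 * (π^2/6) := by
    unfold e2 gg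
    norm_num
  have h2 := hasSum_ite_eq ((0,0) : ℕ × ℕ) (e2 (0,0))
  have e : (fun p : ℕ × ℕ => if p = (0,0) then e2 p else 0)
      = fun p : ℕ × ℕ => if p = (0,0) then e2 (0,0) else 0 := by
    funext p
    by_cases hp : p = (0,0)
    · rw [if_pos hp, if_pos hp, hp]
    · rw [if_neg hp, if_neg hp]
  rw [← e] at h2
  rw [h] at h2
  exact h2

lemma e0c_hasSum : HasSum (fun p : ℕ × ℕ => if p.1 = 0 ∧ 0 < p.2 then e2 p else 0)
    (π^2/6 * (π^2/6)) := by
  have hz : HasSum (fun k : ℕ => 1/(((k:ℝ)+1)*((k:ℝ)+1+((0:ℕ):ℝ)))) (π^2/6) := by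
    convert z2' using 2 with k
    rw [sq]
    norm_num
  have h := (L4 0 hz).mul_left (π^2/6)
  have hinj : Function.Injective (fun k : ℕ => ((0, k+1) : ℕ × ℕ)) := by
    intro a b hab
    simp only [Prod.mk.injEq] at hab
    omega
  rw [← Function.Injective.hasSum_iff hinj (by
    rintro ⟨a,b⟩ hp
    have : ¬ (a = 0 ∧ 0 < b) := by
      rintro ⟨h1, h2⟩
      exact hp ⟨b-1, by dsimp only; rw [Prod.mk.injEq]; omega⟩
    simp [this])]
  convert h using 1
  · rfl
  funext k
  simp only [Function.comp]
  rw [if_pos (show True ∧ 0 < k+1 from ⟨trivial, Nat.succ_pos k⟩)]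
  unfold e2 gg
  rw [if_pos rfl, if_neg (Nat.succ_ne_zero k)]
  have h1 : ((k:ℝ)+1) ≠ 0 := by positivity
  have h2 : ((k:ℝ)+2) ≠ 0 := by positivity
  have hc : (((k+1:ℕ)):ℝ) = (k:ℝ)+1 := by push_cast; ring
  rw [hc]
  push_cast
  field_simp
  ring

lemma eb0_hasSum : HasSum (fun p : ℕ × ℕ => if 0 < p.1 ∧ p.2 = 0 then e2 p else 0)
    (π^2/6 * (π^2/6)) := by
  have h := (Equiv.prodComm ℕ ℕ).hasSum_iff.2 e0c_hasSum
  convert h using 1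
  funext p
  rcases p with ⟨a,b⟩
  show (if 0 < a ∧ b = 0 then e2 (a, b) else 0) = (if b = 0 ∧ 0 < a then e2 (b, a) else 0)
  by_cases hc : 0 < a ∧ b = 0
  · simp only [if_pos hc, if_pos (show b = 0 ∧ 0 < a from ⟨hc.2, hc.1⟩)]
    unfold e2
    simp only []
    rw [mul_comm (gg a) (gg b)]
    congr 1
    push_cast
    ring
  · simp only [if_neg hc, if_neg (show ¬(b = 0 ∧ 0 < a) by tauto)]

lemma e11_hasSum : HasSum (fun p : ℕ × ℕ => if 0 < p.1 ∧ 0 < p.2 then e2 p else 0)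
    (17*π^4/180) := by
  have hinj : Function.Injective (fun p : ℕ × ℕ => (p.1+1, p.2+1)) := by
    rintro ⟨a,b⟩ ⟨c,d⟩ h
    simp only [Prod.mk.injEq] at h ⊢
    omega
  rw [← Function.Injective.hasSum_iff hinj (by
    rintro ⟨a,b⟩ hp
    have : ¬ (0 < a ∧ 0 < b) := by
      rintro ⟨h1, h2⟩
      exact hp ⟨(a-1, b-1), by dsimp only; rw [Prod.mk.injEq]; omega⟩
    simp [this])]
  convert fT_hasSum using 1
  funext p
  rcases p with ⟨j,k⟩
  simp only [Function.comp]
  rw [if_pos ⟨Nat.succ_pos j, Nat.succ_pos k⟩]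
  unfold e2 gg fT
  rw [if_neg (Nat.succ_ne_zero j), if_neg (Nat.succ_ne_zero k)]
  have hcj : (((j+1:ℕ)):ℝ) = (j:ℝ)+1 := by push_cast; ring
  have hck : (((k+1:ℕ)):ℝ) = (k:ℝ)+1 := by push_cast; ring
  simp only [hcj, hck]
  rw [div_mul_div_comm, div_div]
  congr 1
  push_cast
  ring

lemma e2_hasSum : HasSum e2 (8*π^4/45) := by
  have hsplit : e2 = fun p : ℕ × ℕ =>
      (if p = (0,0) then e2 p else 0) + ((if p.1 = 0 ∧ 0 < p.2 then e2 p else 0) +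
      ((if 0 < p.1 ∧ p.2 = 0 then e2 p else 0) + (if 0 < p.1 ∧ 0 < p.2 then e2 p else 0))) := by
    funext p
    rcases p with ⟨a,b⟩
    rcases Nat.eq_zero_or_pos a with ha | ha <;> rcases Nat.eq_zero_or_pos b with hb | hb
    · subst ha; subst hb; simp
    · subst ha
      rw [if_neg (by simp; omega), if_pos ⟨rfl, hb⟩, if_neg (by omega), if_neg (by omega)]
      ring
    · subst hb
      rw [if_neg (by simp; omega), if_neg (by omega), if_pos ⟨ha, rfl⟩, if_neg (by omega)]
      ring
    · rw [if_neg (by simp; omega), if_neg (by omega), if_neg (by omega), if_pos ⟨ha, hb⟩]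
      ring
  have h := e00_hasSum.add (e0c_hasSum.add (eb0_hasSum.add e11_hasSum))
  rw [← hsplit] at h
  convert h using 1
  have hpi : π^2/6 * (π^2/6) = π^4/36 := by ring
  rw [hpi]
  ring

noncomputable def FF : (ℕ × ℕ) × (ℕ × ℕ) → ℝ := fun q =>
  1/(((q.2.1:ℝ)+1)*((q.2.1:ℝ)+(q.1.1:ℝ)+1)) *
    (1/(((q.2.2:ℝ)+1)*((q.2.2:ℝ)+(q.1.2:ℝ)+1)) * (1/((q.1.1:ℝ)+(q.1.2:ℝ)+1)))

lemma FF_nonneg (q : (ℕ × ℕ) × (ℕ × ℕ)) : 0 ≤ FF q := by unfold FF; positivity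

lemma FF_row (bc : ℕ × ℕ) : HasSum (fun ad : ℕ × ℕ => FF (bc, ad)) (e2 bc) := by
  rcases bc with ⟨b, c⟩
  apply hasSum_prod_of_nonneg (fun ad => FF_nonneg _)
    (g := fun a : ℕ => 1/(((a:ℝ)+1)*((a:ℝ)+(b:ℝ)+1)) * (gg c * (1/((b:ℝ)+(c:ℝ)+1))))
  · intro a
    have h := ((gg_hasSum c).mul_left (1/((b:ℝ)+(c:ℝ)+1))).mul_left
      (1/(((a:ℝ)+1)*((a:ℝ)+(b:ℝ)+1)))
    have e : (fun d : ℕ => 1/(((a:ℝ)+1)*((a:ℝ)+(b:ℝ)+1)) *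
        (1/((b:ℝ)+(c:ℝ)+1) * (1/(((d:ℝ)+1)*((d:ℝ)+(c:ℝ)+1)))))
        = fun d : ℕ => FF ((b,c), (a,d)) := by
      funext d
      unfold FF
      ring
    rw [e] at h
    convert h using 1
    · rfl
    ring
  · have h := (gg_hasSum b).mul_right (gg c * (1/((b:ℝ)+(c:ℝ)+1)))
    convert h using 1
    · rfl
    unfold e2
    simp only []
    field_simp

lemma FF_hasSum : HasSum FF (8*π^4/45) :=
  hasSum_prod_of_nonneg FF_nonneg FF_row e2_hasSum

def sigmaEq : (ℕ × ℕ × ℕ × ℕ) ≃ (ℕ × ℕ) × (ℕ × ℕ) where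
  toFun p := ((p.2.1, p.2.2.1), (p.1, p.2.2.2))
  invFun q := (q.2.1, q.1.1, q.1.2, q.2.2)
  left_inv p := rfl
  right_inv q := rfl

/-- The Mirzakhani volume `V_{𝔻₈}` of the moduli space of ideal octagons:
`∑_{a,b,c,d ≥ 1} 1/(a(a+b-1)(b+c-1)(c+d-1)d) = 8π⁴/45`. -/
theorem octagon_volume :
    HasSum
      (fun p : ℕ × ℕ × ℕ × ℕ =>
        1 / (((p.1 : ℝ) + 1) * (((p.1 : ℝ) + 1) + ((p.2.1 : ℝ) + 1) - 1) *
          (((p.2.1 : ℝ) + 1) + ((p.2.2.1 : ℝ) + 1) - 1) *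
          (((p.2.2.1 : ℝ) + 1) + ((p.2.2.2 : ℝ) + 1) - 1) * ((p.2.2.2 : ℝ) + 1)))
      (8 * Real.pi ^ 4 / 45) := by
  have h := sigmaEq.hasSum_iff.2 FF_hasSum
  convert h using 1
  funext p
  rcases p with ⟨a, b, c, d⟩
  simp only [Function.comp, sigmaEq, Equiv.coe_fn_mk, FF]
  rw [div_mul_div_comm, div_mul_div_comm]
  congr 1
  · ring
  · ring
end

section
/- For every real number y with 0 ≤ y < 1, the series ∑_{j=1}^{∞} (H_j / j) · y^j converges, and its sum equals Li₂(y) + (1/2)·(log(1−y))², where H_j = ∑_{i=1}^{j} 1/i is the j-th harmonic number and Li₂(y) = ∑_{n=1}^{∞} y^n/n² is the dilogarithm. -/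
open Real

private lemma cauchy_term_aux (y : ℝ) (n : ℕ) :
    ∑ k ∈ Finset.range (n+1), (y^(k+1)/((k:ℝ)+1)) * (y^((n-k)+1)/(((n-k:ℕ):ℝ)+1)) =
    2 * ((∑ i ∈ Finset.range (n+1), 1/((i:ℝ)+1)) / ((n:ℝ)+2)) * y^(n+2) := by
  have h1 : ∀ k ∈ Finset.range (n+1),
      (y^(k+1)/((k:ℝ)+1)) * (y^((n-k)+1)/(((n-k:ℕ):ℝ)+1)) =
      y^(n+2) / ((n:ℝ)+2) * (1/((k:ℝ)+1) + 1/(((n-k:ℕ):ℝ)+1)) := by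
    intro k hk
    have hk' : k ≤ n := Nat.lt_succ_iff.mp (Finset.mem_range.mp hk)
    have hc : ((n - k : ℕ) : ℝ) = (n:ℝ) - k := by
      push_cast [Nat.cast_sub hk']; ring
    have hpow : y^(k+1) * y^((n-k)+1) = y^(n+2) := by
      rw [← pow_add]; congr 1; omega
    have h2 : ((k:ℝ)+1) ≠ 0 := by positivity
    have h3 : (((n-k:ℕ):ℝ)+1) ≠ 0 := by positivity
    have h4 : ((n:ℝ)+2) ≠ 0 := by positivity
    rw [div_mul_div_comm, hpow, hc]
    have h3' : ((n:ℝ) - k + 1) ≠ 0 := by rw [hc] at h3; exact h3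
    field_simp
    ring
  rw [Finset.sum_congr rfl h1, ← Finset.mul_sum, Finset.sum_add_distrib]
  have h5 : ∑ k ∈ Finset.range (n+1), 1/(((n-k:ℕ):ℝ)+1)
      = ∑ i ∈ Finset.range (n+1), 1/((i:ℝ)+1) := by
    have := Finset.sum_range_reflect (fun j : ℕ => 1/((j:ℝ)+1)) (n+1)
    simpa using this
  rw [h5]
  ring

/-- For `0 ≤ y < 1`, `∑_{j≥1} (H_j/j) y^j = Li₂(y) + (1/2) log²(1-y)`, where
`H_j` is the `j`-th harmonic number and `Li₂` is the dilogarithm. -/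
theorem harmonic_series_dilog (y : ℝ) (h0 : 0 ≤ y) (h1 : y < 1) :
    HasSum
      (fun j : ℕ =>
        (∑ i ∈ Finset.range (j + 1), 1 / ((i : ℝ) + 1)) / ((j : ℝ) + 1) * y ^ (j + 1))
      ((∑' n : ℕ, y ^ (n + 1) / ((n : ℝ) + 1) ^ 2) + 1 / 2 * Real.log (1 - y) ^ 2) := by
  have hy : |y| < 1 := abs_lt.mpr ⟨by linarith, h1⟩
  set f : ℕ → ℝ := fun n => y^(n+1)/((n:ℝ)+1) with hfdef
  have hf : HasSum f (-Real.log (1-y)) := Real.hasSum_pow_div_log_of_abs_lt_one hy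
  have hfn : Summable (fun n => ‖f n‖) := by
    have : ∀ n, ‖f n‖ = f n := fun n => abs_of_nonneg (by positivity)
    simpa [this] using hf.summable
  have hprod := hasSum_sum_range_mul_of_summable_norm hfn hfn
  rw [hf.tsum_eq] at hprod
  have hprod2 : HasSum (fun n => 2 * ((∑ i ∈ Finset.range (n+1), 1/((i:ℝ)+1)) / ((n:ℝ)+2))
      * y^(n+2)) (Real.log (1-y) ^ 2) := by
    have he : (fun n => ∑ k ∈ Finset.range (n+1), f k * f (n-k))
        = fun n => 2 * ((∑ i ∈ Finset.range (n+1), 1/((i:ℝ)+1)) / ((n:ℝ)+2)) * y^(n+2) := by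
      funext n
      exact cauchy_term_aux y n
    rw [he] at hprod
    convert hprod using 1
    · rfl
    ring
  -- q part
  set q : ℕ → ℝ := fun j => (∑ i ∈ Finset.range j, 1/((i:ℝ)+1))/((j:ℝ)+1) * y^(j+1) with hqdef
  have hq1 : HasSum (fun n => q (n+1)) (1/2 * Real.log (1-y) ^ 2) := by
    have := hprod2.mul_left (1/2)
    convert this using 2 with n
    · rfl
    simp only [hqdef]
    push_cast
    ring
  have hq : HasSum q (1/2 * Real.log (1-y) ^ 2) := by
    have h := (hasSum_nat_add_iff (f := q) 1).mp hq1
    simpa [hqdef] using h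
  -- p part
  set p : ℕ → ℝ := fun n => y^(n+1)/((n:ℝ)+1)^2 with hpdef
  have hps : Summable p := by
    refine Summable.of_nonneg_of_le (fun n => by positivity) (fun n => ?_)
      (((summable_geometric_of_lt_one h0 h1).mul_left y))
    have h2 : (1:ℝ) ≤ ((n:ℝ)+1)^2 := by nlinarith [Nat.cast_nonneg (α := ℝ) n]
    calc y^(n+1)/((n:ℝ)+1)^2 ≤ y^(n+1)/1 := by
          apply div_le_div_of_nonneg_left (by positivity) (by norm_num) h2
      _ = y * y^n := by ring
  have hp : HasSum p (∑' n : ℕ, y ^ (n + 1) / ((n : ℝ) + 1) ^ 2) := hps.hasSum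
  have := hp.add hq
  convert this using 2 with j
  simp only [hqdef, hpdef]
  rw [Finset.sum_range_succ]
  have hc : ((j:ℝ)+1) ≠ 0 := by positivity
  field_simp
  ring
end

section
/- For every real number x with 0 < |x| < 1/π, the series ∑_{j=0}^{∞} [ ((2j)! / (4^j · (j!)² · (2j+1))) · π^{2j} · x^{2j} + ((4^j · (j!)²) / ((j+1) · (2j+1)!)) · π^{2j} · x^{2j+1} ] converges, and its sum equals arcsin(πx)/(πx) + x · (arcsin(πx)/(πx))². -/
open Real


noncomputable def mzc (j : ℕ) : ℝ := (Nat.factorial (2*j) : ℝ) / (4^j * (Nat.factorial j : ℝ)^2)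
noncomputable def mze (j : ℕ) : ℝ := (4^j * (Nat.factorial j : ℝ)^2) / (Nat.factorial (2*j) : ℝ)
noncomputable def mzb (j : ℕ) : ℝ :=
  (4^j * (Nat.factorial j : ℝ)^2) / (((j:ℝ)+1) * (Nat.factorial (2*j+1) : ℝ))

lemma fact_cast_pos (n : ℕ) : (0:ℝ) < (Nat.factorial n : ℝ) := by
  exact_mod_cast Nat.factorial_pos n

lemma fact2succ (j : ℕ) : ((Nat.factorial (2*(j+1))) : ℝ)
    = (2*(j:ℝ)+2) * (2*(j:ℝ)+1) * (Nat.factorial (2*j) : ℝ) := by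
  have h : 2*(j+1) = (2*j+1)+1 := by ring
  rw [h, Nat.factorial_succ, Nat.factorial_succ]
  push_cast; ring

lemma mzc_pos (j : ℕ) : 0 < mzc j := by
  unfold mzc; positivity

lemma mze_pos (j : ℕ) : 0 < mze j := by
  unfold mze; positivity

lemma mzb_pos (j : ℕ) : 0 < mzb j := by
  unfold mzb; positivity

lemma mzc_zero : mzc 0 = 1 := by simp [mzc, Nat.factorial]

lemma mzb_zero : mzb 0 = 1 := by simp [mzb, Nat.factorial]

lemma mze_zero : mze 0 = 1 := by simp [mze, Nat.factorial]

lemma mzc_rec (j : ℕ) : (2*(j:ℝ)+2) * mzc (j+1) = (2*(j:ℝ)+1) * mzc j := by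
  unfold mzc
  rw [fact2succ]
  have h1 : ((Nat.factorial (j+1)) : ℝ) = ((j:ℝ)+1) * (Nat.factorial j : ℝ) := by
    rw [Nat.factorial_succ]; push_cast; ring
  rw [h1]
  have h2 : (Nat.factorial j : ℝ) ≠ 0 := (fact_cast_pos j).ne'
  have h3 : (4:ℝ)^j ≠ 0 := by positivity
  field_simp
  ring

lemma mze_rec (j : ℕ) : (2*(j:ℝ)+1) * mze (j+1) = (2*(j:ℝ)+2) * mze j := by
  unfold mze
  rw [fact2succ]
  have h1 : ((Nat.factorial (j+1)) : ℝ) = ((j:ℝ)+1) * (Nat.factorial j : ℝ) := by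
    rw [Nat.factorial_succ]; push_cast; ring
  rw [h1]
  have h2 : (Nat.factorial (2*j) : ℝ) ≠ 0 := (fact_cast_pos _).ne'
  have h4 : (2*(j:ℝ)+2)*(2*(j:ℝ)+1) ≠ 0 := by positivity
  field_simp
  ring

lemma mzb2e (j : ℕ) : (2*(j:ℝ)+2) * mzb j * (2*(j:ℝ)+1) = 2 * mze j := by
  unfold mzb mze
  have h : ((Nat.factorial (2*j+1)) : ℝ) = (2*(j:ℝ)+1) * (Nat.factorial (2*j) : ℝ) := by
    rw [Nat.factorial_succ]; push_cast; ring
  rw [h]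
  have h2 : (Nat.factorial (2*j) : ℝ) ≠ 0 := (fact_cast_pos _).ne'
  have h3 : ((j:ℝ)+1) ≠ 0 := by positivity
  have h4 : (2*(j:ℝ)+1) ≠ 0 := by positivity
  field_simp

lemma mzc_le_one (j : ℕ) : mzc j ≤ 1 := by
  induction j with
  | zero => simp [mzc_zero]
  | succ n ih =>
      have hrec := mzc_rec n
      have h1 : (0:ℝ) < 2*(n:ℝ)+2 := by positivity
      have : mzc (n+1) = (2*(n:ℝ)+1)/(2*(n:ℝ)+2) * mzc n := by
        field_simp
        linarith [hrec]
      rw [this]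
      have hb : (2*(n:ℝ)+1)/(2*(n:ℝ)+2) ≤ 1 := by
        rw [div_le_one h1]; linarith
      calc (2*(n:ℝ)+1)/(2*(n:ℝ)+2) * mzc n ≤ 1 * mzc n := by
            exact mul_le_mul_of_nonneg_right hb (mzc_pos n).le
        _ ≤ 1 := by rw [one_mul]; exact ih

lemma mze_le (j : ℕ) : mze j ≤ 2*(j:ℝ)+1 := by
  induction j with
  | zero => simp [mze_zero]
  | succ n ih =>
      have hrec := mze_rec n
      have h1 : (0:ℝ) < 2*(n:ℝ)+1 := by positivity
      have : mze (n+1) = (2*(n:ℝ)+2)/(2*(n:ℝ)+1) * mze n := by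
        field_simp
        linarith [hrec]
      rw [this]
      have := mze_pos n
      have key : (2*(n:ℝ)+2)/(2*(n:ℝ)+1) * mze n ≤ (2*(n:ℝ)+2) := by
        rw [div_mul_eq_mul_div, div_le_iff₀ h1]
        have : mze n ≤ 2*(n:ℝ)+1 := ih
        nlinarith
      push_cast
      linarith

lemma mzb_le_one (j : ℕ) : mzb j ≤ 1 := by
  have h := mzb2e j
  have he := mze_le j
  have h1 : (0:ℝ) < 2*(j:ℝ)+2 := by positivity
  have h2 : (0:ℝ) < 2*(j:ℝ)+1 := by positivity
  have h3 : mzb j ≤ (2*(2*(j:ℝ)+1))/((2*(j:ℝ)+2)*(2*(j:ℝ)+1)) := by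
    rw [le_div_iff₀ (by positivity)]
    nlinarith
  have h4 : (2*(2*(j:ℝ)+1))/((2*(j:ℝ)+2)*(2*(j:ℝ)+1)) ≤ 1 := by
    rw [div_le_one (by positivity)]
    nlinarith
  linarith


/-- summability helper -/
lemma mz_summable_aux {q C : ℝ} (hq : |q| < 1) : Summable (fun j : ℕ => C * (((j:ℝ)+1) * q^j)) := by
  have h1 : Summable (fun j : ℕ => (j:ℝ)^1 * q^j) :=
    summable_pow_mul_geometric_of_norm_lt_one 1 (by rwa [Real.norm_eq_abs])
  have h2 : Summable (fun j : ℕ => q^j) := summable_geometric_of_norm_lt_one (by rwa [Real.norm_eq_abs])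
  have h3 : Summable (fun j : ℕ => (j:ℝ)^1 * q^j + q^j) := h1.add h2
  have : (fun j : ℕ => C * (((j:ℝ)+1) * q^j)) = fun j : ℕ => C * ((j:ℝ)^1 * q^j + q^j) := by
    funext j; ring
  rw [this]
  exact h3.mul_left C

lemma mz_summable_of_bound {f : ℕ → ℝ} {q C : ℝ} (hq : |q| < 1)
    (hb : ∀ j, |f j| ≤ C * (((j:ℝ)+1) * |q|^j)) : Summable f := by
  refine Summable.of_norm_bounded (mz_summable_aux (q := |q|) (C := C) (by rwa [abs_abs])) ?_
  simpa [Real.norm_eq_abs] using hb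

/-- termwise differentiation on the unit disc -/
lemma mz_hasDerivAt_tsum {f f' : ℕ → ℝ → ℝ} {C : ℝ}
    (hderiv : ∀ (j : ℕ) (z : ℝ), HasDerivAt (f j) (f' j z) z)
    (h0 : ∀ j, j ≠ 0 → f j 0 = 0)
    (hb : ∀ (j : ℕ) (r z : ℝ), 0 < r → r < 1 → |z| ≤ r →
      |f' j z| ≤ C / r * (((j:ℝ)+1) * (r^2)^j))
    {y : ℝ} (hy : |y| < 1) :
    HasDerivAt (fun z => ∑' j, f j z) (∑' j, f' j y) y := by
  set r : ℝ := (1 + |y|)/2 with hr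
  have hy0 : 0 ≤ |y| := abs_nonneg y
  have hr0 : 0 < r := by rw [hr]; linarith
  have hr1 : r < 1 := by rw [hr]; linarith
  have hyr : |y| < r := by rw [hr]; linarith
  have hq : |r^2| < 1 := by
    rw [abs_of_nonneg (by positivity)]
    nlinarith
  have hu : Summable (fun j : ℕ => C / r * (((j:ℝ)+1) * (r^2)^j)) := mz_summable_aux hq
  have hball : ∀ z ∈ Metric.ball (0:ℝ) r, |z| < r := by
    intro z hz; simpa [Real.dist_eq] using hz
  refine hasDerivAt_tsum_of_isPreconnected hu Metric.isOpen_ball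
    (convex_ball (0:ℝ) r).isPreconnected
    (fun j z _ => hderiv j z)
    (fun j z hz => ?_) (y₀ := 0) (by simpa [Real.dist_eq] using hr0)
    ?_ (by simpa [Real.dist_eq] using hyr)
  · rw [Real.norm_eq_abs]
    exact hb j r z hr0 hr1 (hball z hz).le
  · apply summable_of_ne_finset_zero (s := {0})
    intro j hj
    simp only [Finset.mem_singleton] at hj
    exact h0 j hj

/-- constancy from vanishing derivative on the unit disc -/
lemma mz_const_of_deriv_zero {f : ℝ → ℝ} (hf : ∀ y, |y| < 1 → HasDerivAt f 0 y)
    {y : ℝ} (hy : |y| < 1) : f y = f 0 := by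
  have habs : ∀ z : ℝ, -1 < z → z < 1 → |z| < 1 := fun z h1 h2 => abs_lt.2 ⟨h1, h2⟩
  rcases abs_lt.1 hy with ⟨hy1, hy2⟩
  rcases le_or_gt 0 y with h | h
  · refine constant_of_has_deriv_right_zero (f := f) (a := 0) (b := y) ?_ ?_ y
      (Set.right_mem_Icc.2 h)
    · intro z hz
      exact (hf z (habs z (by linarith [hz.1]) (by linarith [hz.2]))).continuousAt.continuousWithinAt
    · intro z hz
      exact (hf z (habs z (by linarith [hz.1]) (by linarith [hz.2.le]))).hasDerivWithinAt.mono
        (fun w hw => trivial)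
  · have := constant_of_has_deriv_right_zero (f := f) (a := y) (b := 0) ?_ ?_ 0
      (Set.right_mem_Icc.2 h.le)
    · exact this.symm
    · intro z hz
      exact (hf z (habs z (by linarith [hz.1]) (by linarith [hz.2]))).continuousAt.continuousWithinAt
    · intro z hz
      exact (hf z (habs z (by linarith [hz.1]) (by linarith [hz.2.le]))).hasDerivWithinAt.mono
        (fun w hw => trivial)

noncomputable section

def mzg (z : ℝ) : ℝ := ∑' j, mzc j * z^(2*j)
def mzg' (z : ℝ) : ℝ := ∑' j, mzc j * (((2*j : ℕ):ℝ) * z^(2*j-1))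
def mzF (z : ℝ) : ℝ := ∑' j, mzc j / (2*(j:ℝ)+1) * z^(2*j+1)
def mzw (z : ℝ) : ℝ := ∑' j : ℕ, (2*(j:ℝ)+2) * mzb j * z^(2*j+1)
def mzw' (z : ℝ) : ℝ := ∑' j : ℕ, (2*(j:ℝ)+2) * mzb j * (((2*j+1 : ℕ):ℝ) * z^(2*j))
def mzG (z : ℝ) : ℝ := ∑' j, mzb j * z^(2*j+2)

variable {y : ℝ}

lemma habs_sq (hy : |y| < 1) : |y^2| < 1 := by
  rw [abs_of_nonneg (sq_nonneg y)]
  nlinarith [abs_nonneg y, sq_abs y]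

lemma habs_pow (j : ℕ) : |y|^(2*j) = |y^2|^j := by
  rw [abs_of_nonneg (sq_nonneg y), ← pow_mul, ← abs_pow, pow_mul]
  rw [abs_of_nonneg (by positivity)]

lemma summable_g (hy : |y| < 1) : Summable (fun j => mzc j * y^(2*j)) := by
  refine mz_summable_of_bound (q := y^2) (C := 1) (habs_sq hy) (fun j => ?_)
  rw [abs_mul, abs_pow, habs_pow, abs_of_pos (mzc_pos j)]
  have h1 : (0:ℝ) ≤ |y^2|^j := by positivity
  nlinarith [mzc_le_one j, mzc_pos j, (Nat.cast_nonneg j : (0:ℝ) ≤ j)]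

lemma summable_g' (hy : |y| < 1) :
    Summable (fun j => mzc j * (((2*j : ℕ):ℝ) * y^(2*j-1))) := by
  rw [← summable_nat_add_iff 1]
  refine mz_summable_of_bound (q := y^2) (C := 4) (habs_sq hy) (fun j => ?_)
  have he : 2*(j+1)-1 = 2*j+1 := by omega
  rw [he, abs_mul, abs_mul, abs_pow, abs_of_pos (mzc_pos _), Nat.abs_cast, pow_succ]
  have h2 : (((2*(j+1) : ℕ)):ℝ) = 2*(j:ℝ)+2 := by push_cast; ring
  have h7 : (((j+1 : ℕ)):ℝ) = (j:ℝ)+1 := by push_cast; ring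
  rw [h2, habs_pow]
  have h3 : (0:ℝ) ≤ |y^2|^j := by positivity
  have h4 : |y| ≤ 1 := hy.le
  calc mzc (j+1) * ((2*(j:ℝ)+2) * (|y^2|^j * |y|))
      ≤ 1 * ((2*(j:ℝ)+2) * (|y^2|^j * 1)) := by
        gcongr <;> first | positivity | exact mzc_le_one _ | exact hy.le
    _ ≤ 4 * (((j:ℝ)+1) * |y^2|^j) := by
        have : (0:ℝ) ≤ (j:ℝ) := Nat.cast_nonneg j
        nlinarith

lemma summable_F (hy : |y| < 1) :
    Summable (fun j => mzc j / (2*(j:ℝ)+1) * y^(2*j+1)) := by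
  refine mz_summable_of_bound (q := y^2) (C := 1) (habs_sq hy) (fun j => ?_)
  rw [abs_mul, abs_pow, pow_succ, habs_pow]
  have h0 : (0:ℝ) < 2*(j:ℝ)+1 := by positivity
  have h1 : |mzc j / (2*(j:ℝ)+1)| ≤ 1 := by
    rw [abs_div, abs_of_pos (mzc_pos j), abs_of_pos h0, div_le_one h0]
    have := mzc_le_one j
    linarith [(Nat.cast_nonneg j : (0:ℝ) ≤ j)]
  have h3 : (0:ℝ) ≤ |y^2|^j := by positivity
  have h4 : |y| ≤ 1 := hy.le
  calc |mzc j / (2*(j:ℝ)+1)| * (|y^2|^j * |y|)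
      ≤ 1 * (|y^2|^j * 1) := by
        gcongr <;> first | positivity | exact h1 | exact h4
    _ ≤ 1 * (((j:ℝ)+1) * |y^2|^j) := by
        have : (0:ℝ) ≤ (j:ℝ) := Nat.cast_nonneg j
        nlinarith

lemma summable_w (hy : |y| < 1) :
    Summable (fun j : ℕ => (2*(j:ℝ)+2) * mzb j * y^(2*j+1)) := by
  refine mz_summable_of_bound (q := y^2) (C := 2) (habs_sq hy) (fun j => ?_)
  rw [abs_mul, abs_mul, abs_pow, pow_succ, habs_pow]
  rw [abs_of_pos (by positivity : (0:ℝ) < 2*(j:ℝ)+2), abs_of_pos (mzb_pos j)]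
  have h3 : (0:ℝ) ≤ |y^2|^j := by positivity
  have h4 : |y| ≤ 1 := hy.le
  calc (2*(j:ℝ)+2) * mzb j * (|y^2|^j * |y|)
      ≤ (2*(j:ℝ)+2) * 1 * (|y^2|^j * 1) := by
        gcongr <;> first | positivity | exact mzb_le_one j | exact h4
    _ ≤ 2 * (((j:ℝ)+1) * |y^2|^j) := by
        have : (0:ℝ) ≤ (j:ℝ) := Nat.cast_nonneg j
        nlinarith

lemma summable_w' (hy : |y| < 1) :
    Summable (fun j : ℕ => (2*(j:ℝ)+2) * mzb j * (((2*j+1 : ℕ):ℝ) * y^(2*j))) := by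
  refine mz_summable_of_bound (q := y^2) (C := 4) (habs_sq hy) (fun j => ?_)
  have h2 : (((2*j+1 : ℕ)):ℝ) = 2*(j:ℝ)+1 := by push_cast; ring
  rw [abs_mul, abs_mul, abs_mul, abs_pow, habs_pow, h2]
  rw [abs_of_pos (by positivity : (0:ℝ) < 2*(j:ℝ)+2), abs_of_pos (mzb_pos j),
    abs_of_pos (by positivity : (0:ℝ) < 2*(j:ℝ)+1)]
  have key : (2*(j:ℝ)+2) * mzb j * (2*(j:ℝ)+1) ≤ 2*(2*(j:ℝ)+1) := by
    rw [mzb2e j]; linarith [mze_le j]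
  have h3 : (0:ℝ) ≤ |y^2|^j := by positivity
  have hc : (0:ℝ) ≤ (2*(j:ℝ)+2) * mzb j * (2*(j:ℝ)+1) := by
    have := (mzb_pos j).le
    positivity
  calc (2*(j:ℝ)+2) * mzb j * ((2*(j:ℝ)+1) * |y^2|^j)
      = ((2*(j:ℝ)+2) * mzb j * (2*(j:ℝ)+1)) * |y^2|^j := by ring
    _ ≤ (2*(2*(j:ℝ)+1)) * |y^2|^j := mul_le_mul_of_nonneg_right key h3
    _ ≤ 4 * (((j:ℝ)+1) * |y^2|^j) := by nlinarith [(Nat.cast_nonneg j : (0:ℝ) ≤ j)]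

lemma summable_G (hy : |y| < 1) : Summable (fun j => mzb j * y^(2*j+2)) := by
  refine mz_summable_of_bound (q := y^2) (C := 1) (habs_sq hy) (fun j => ?_)
  have he : 2*j+2 = 2*(j+1) := by omega
  rw [abs_mul, abs_pow, he, habs_pow, abs_of_pos (mzb_pos j), pow_succ]
  have h3 : (0:ℝ) ≤ |y^2|^j := by positivity
  have h4 : |y^2| ≤ 1 := (habs_sq hy).le
  calc mzb j * (|y^2|^j * |y^2|)
      ≤ 1 * (|y^2|^j * 1) := by
        gcongr <;> first | positivity | exact mzb_le_one j | exact h4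
    _ ≤ 1 * (((j:ℝ)+1) * |y^2|^j) := by
        have : (0:ℝ) ≤ (j:ℝ) := Nat.cast_nonneg j
        nlinarith


variable {y : ℝ}

lemma pow_abs_le {r z : ℝ} (hzr : |z| ≤ r) (n : ℕ) : |z^n| ≤ r^n := by
  rw [abs_pow]; exact pow_le_pow_left₀ (abs_nonneg z) hzr n

lemma mzg_hasDeriv (hy : |y| < 1) : HasDerivAt mzg (mzg' y) y := by
  refine mz_hasDerivAt_tsum (C := 2) (fun j z => (hasDerivAt_pow (2*j) z).const_mul (mzc j))
    (fun j hj => by simp [zero_pow (by omega : 2*j ≠ 0)]) ?_ hy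
  intro j r z hr0 hr1 hzr
  match j with
  | 0 => simp; positivity
  | (k+1) =>
    have he : 2*(k+1)-1 = 2*k+1 := by omega
    rw [he, abs_mul, abs_mul, Nat.abs_cast, abs_of_pos (mzc_pos _)]
    have h2 : (((2*(k+1) : ℕ)):ℝ) = 2*(k:ℝ)+2 := by push_cast; ring
    have h7 : (((k+1 : ℕ)):ℝ) = (k:ℝ)+1 := by push_cast; ring
    rw [h2, h7]
    have hzp : |z^(2*k+1)| ≤ r^(2*k+1) := pow_abs_le hzr _
    have hrhs : 2 / r * ((((k:ℝ)+1)+1) * (r^2)^(k+1)) = 2*(((k:ℝ)+1)+1) * r^(2*k+1) := by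
      rw [← pow_mul]
      have : r^(2*(k+1)) = r^(2*k+1) * r := by rw [← pow_succ]; ring_nf
      rw [this]; field_simp
    rw [hrhs]
    have h3 : (0:ℝ) ≤ r^(2*k+1) := by positivity
    calc mzc (k+1) * ((2*(k:ℝ)+2) * |z^(2*k+1)|)
        ≤ 1 * ((2*(k:ℝ)+2) * r^(2*k+1)) := by
          gcongr <;> first | positivity | exact mzc_le_one _
      _ ≤ 2*(((k:ℝ)+1)+1) * r^(2*k+1) := by
          have : (0:ℝ) ≤ (k:ℝ) := Nat.cast_nonneg k
          nlinarith

lemma mzF_hasDeriv (hy : |y| < 1) : HasDerivAt mzF (mzg y) y := by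
  have key := mz_hasDerivAt_tsum (C := 2)
    (f := fun j z => mzc j / (2*(j:ℝ)+1) * z^(2*j+1))
    (f' := fun j z => mzc j / (2*(j:ℝ)+1) * (((2*j+1 : ℕ):ℝ) * z^(2*j)))
    (fun j z => (hasDerivAt_pow (2*j+1) z).const_mul _)
    (fun j hj => by simp)
    ?_ hy
  · have : (∑' j, mzc j / (2*(j:ℝ)+1) * (((2*j+1 : ℕ):ℝ) * y^(2*j))) = mzg y := by
      refine tsum_congr fun j => ?_
      have h0 : (2*(j:ℝ)+1) ≠ 0 := by positivity
      have h2 : (((2*j+1 : ℕ)):ℝ) = 2*(j:ℝ)+1 := by push_cast; ring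
      rw [h2]; field_simp
    rwa [this] at key
  · intro j r z hr0 hr1 hzr
    have h0 : (0:ℝ) < 2*(j:ℝ)+1 := by positivity
    have h1 : |mzc j / (2*(j:ℝ)+1)| ≤ 1 := by
      rw [abs_div, abs_of_pos (mzc_pos j), abs_of_pos h0, div_le_one h0]
      linarith [mzc_le_one j, (Nat.cast_nonneg j : (0:ℝ) ≤ j)]
    rw [abs_mul, abs_mul, Nat.abs_cast]
    have h2 : (((2*j+1 : ℕ)):ℝ) = 2*(j:ℝ)+1 := by push_cast; ring
    rw [h2]
    have hzp : |z^(2*j)| ≤ (r^2)^j := by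
      rw [← pow_mul r 2 j]; exact pow_abs_le hzr _
    have hr : r ≤ 1 := hr1.le
    have hq : (0:ℝ) ≤ (r^2)^j := by positivity
    have hj0 : (0:ℝ) ≤ (j:ℝ) := Nat.cast_nonneg j
    have hmono : (2*(j:ℝ)+1) * r ≤ 2*((j:ℝ)+1) := by nlinarith
    calc |mzc j / (2*(j:ℝ)+1)| * ((2*(j:ℝ)+1) * |z^(2*j)|)
        ≤ 1 * ((2*(j:ℝ)+1) * (r^2)^j) := by
          gcongr <;> first | positivity | exact h1
      _ ≤ 2 / r * (((j:ℝ)+1) * (r^2)^j) := by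
          rw [div_mul_eq_mul_div, le_div_iff₀ hr0]
          calc 1 * ((2*(j:ℝ)+1) * (r^2)^j) * r = ((2*(j:ℝ)+1)*r) * (r^2)^j := by ring
            _ ≤ (2*((j:ℝ)+1)) * (r^2)^j := mul_le_mul_of_nonneg_right hmono hq
            _ = 2 * (((j:ℝ)+1) * (r^2)^j) := by ring

lemma mzw_hasDeriv (hy : |y| < 1) : HasDerivAt mzw (mzw' y) y := by
  refine mz_hasDerivAt_tsum (C := 4)
    (fun j z => (hasDerivAt_pow (2*j+1) z).const_mul ((2*(j:ℝ)+2) * mzb j))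
    (fun j hj => by simp) ?_ hy
  intro j r z hr0 hr1 hzr
  rw [abs_mul, abs_mul, abs_mul, Nat.abs_cast, abs_of_pos (mzb_pos j),
    abs_of_pos (by positivity : (0:ℝ) < 2*(j:ℝ)+2)]
  have h2 : (((2*j+1 : ℕ)):ℝ) = 2*(j:ℝ)+1 := by push_cast; ring
  rw [h2]
  have hzp : |z^(2*j)| ≤ (r^2)^j := by
    rw [← pow_mul r 2 j]; exact pow_abs_le hzr _
  have hq : (0:ℝ) ≤ (r^2)^j := by positivity
  have key : (2*(j:ℝ)+2) * mzb j * (2*(j:ℝ)+1) ≤ 2*(2*(j:ℝ)+1) := by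
    rw [mzb2e j]; linarith [mze_le j]
  have hb0 : (0:ℝ) ≤ (2*(j:ℝ)+2) * mzb j := by
    have := (mzb_pos j).le; positivity
  calc (2*(j:ℝ)+2) * mzb j * ((2*(j:ℝ)+1) * |z^(2*j)|)
      ≤ (2*(j:ℝ)+2) * mzb j * ((2*(j:ℝ)+1) * (r^2)^j) := by gcongr
    _ = ((2*(j:ℝ)+2) * mzb j * (2*(j:ℝ)+1)) * (r^2)^j := by ring
    _ ≤ (2*(2*(j:ℝ)+1)) * (r^2)^j := by gcongr
    _ ≤ 4 / r * (((j:ℝ)+1) * (r^2)^j) := by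
        rw [div_mul_eq_mul_div, le_div_iff₀ hr0]
        have hj0 : (0:ℝ) ≤ (j:ℝ) := Nat.cast_nonneg j
        have hr : r ≤ 1 := hr1.le
        have hmono : (2*(2*(j:ℝ)+1)) * r ≤ 4*((j:ℝ)+1) := by nlinarith
        calc (2*(2*(j:ℝ)+1)) * (r^2)^j * r = ((2*(2*(j:ℝ)+1))*r) * (r^2)^j := by ring
          _ ≤ (4*((j:ℝ)+1)) * (r^2)^j := mul_le_mul_of_nonneg_right hmono hq
          _ = 4 * (((j:ℝ)+1) * (r^2)^j) := by ring

lemma mzG_hasDeriv (hy : |y| < 1) : HasDerivAt mzG (mzw y) y := by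
  have key := mz_hasDerivAt_tsum (C := 2)
    (f := fun j z => mzb j * z^(2*j+2))
    (f' := fun j z => mzb j * (((2*j+2 : ℕ):ℝ) * z^(2*j+1)))
    (fun j z => (hasDerivAt_pow (2*j+2) z).const_mul _)
    (fun j hj => by simp)
    ?_ hy
  · have : (∑' j, mzb j * (((2*j+2 : ℕ):ℝ) * y^(2*j+1))) = mzw y := by
      refine tsum_congr fun j => ?_
      have h2 : (((2*j+2 : ℕ)):ℝ) = 2*(j:ℝ)+2 := by push_cast; ring
      rw [h2]; ring
    rwa [this] at key
  · intro j r z hr0 hr1 hzr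
    rw [abs_mul, abs_mul, Nat.abs_cast, abs_of_pos (mzb_pos j)]
    have h2 : (((2*j+2 : ℕ)):ℝ) = 2*(j:ℝ)+2 := by push_cast; ring
    rw [h2]
    have hzp : |z^(2*j+1)| ≤ (r^2)^j * r := by
      rw [← pow_mul r 2 j, ← pow_succ r]; exact pow_abs_le hzr _
    have hq : (0:ℝ) ≤ (r^2)^j := by positivity
    calc mzb j * ((2*(j:ℝ)+2) * |z^(2*j+1)|)
        ≤ 1 * ((2*(j:ℝ)+2) * ((r^2)^j * r)) := by
          gcongr <;> first | positivity | exact mzb_le_one j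
      _ ≤ 2 / r * (((j:ℝ)+1) * (r^2)^j) := by
          rw [div_mul_eq_mul_div, le_div_iff₀ hr0]
          have hj0 : (0:ℝ) ≤ (j:ℝ) := Nat.cast_nonneg j
          have hr : r ≤ 1 := hr1.le
          have hrr : r*r ≤ 1 := by nlinarith
          have hmono : (2*(j:ℝ)+2) * (r*r) ≤ 2*((j:ℝ)+1) := by nlinarith
          calc 1 * ((2*(j:ℝ)+2) * ((r^2)^j * r)) * r
              = ((2*(j:ℝ)+2)*(r*r)) * (r^2)^j := by ring
            _ ≤ (2*((j:ℝ)+1)) * (r^2)^j := mul_le_mul_of_nonneg_right hmono hq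
            _ = 2 * (((j:ℝ)+1) * (r^2)^j) := by ring

variable {y : ℝ}
lemma one_sub_sq_pos (hy : |y| < 1) : 0 < 1 - y^2 := by
  nlinarith [sq_abs y, abs_nonneg y]

lemma mzg_ode (hy : |y| < 1) : (1 - y^2) * mzg' y = y * mzg y := by
  have h1 : HasSum (fun j => mzc j * (((2*j : ℕ):ℝ) * y^(2*j-1))) (mzg' y) :=
    (summable_g' hy).hasSum
  have h2 : HasSum (fun j => mzc j * y^(2*j)) (mzg y) := (summable_g hy).hasSum
  have h3 : HasSum (fun j : ℕ => mzc (j+1) * (((2*(j+1) : ℕ):ℝ) * y^(2*(j+1)-1))) (mzg' y) := by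
    apply (hasSum_nat_add_iff (f := fun j => mzc j * (((2*j : ℕ):ℝ) * y^(2*j-1))) 1).2
    simpa using h1
  have key := h3.sub ((h1.mul_left (y^2)).add (h2.mul_left y))
  have hterm : ∀ j : ℕ, mzc (j+1) * (((2*(j+1) : ℕ):ℝ) * y^(2*(j+1)-1)) -
      (y^2 * (mzc j * (((2*j : ℕ):ℝ) * y^(2*j-1))) + y * (mzc j * y^(2*j))) = 0 := by
    intro j
    match j with
    | 0 =>
      have h := mzc_rec 0
      norm_num at h ⊢
      linear_combination y * h
    | (k+1) =>
      have h := mzc_rec (k+1)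
      have e1 : 2*(k+1+1)-1 = 2*k+3 := by omega
      have e2 : 2*(k+1)-1 = 2*k+1 := by omega
      have e3 : 2*(k+1) = 2*k+2 := by omega
      rw [e1, e2, e3]
      push_cast at h ⊢
      linear_combination y^(2*k+3) * h
  simp only [hterm] at key
  have h0 : HasSum (fun _ : ℕ => (0:ℝ)) 0 := hasSum_zero
  have := h0.unique key
  linear_combination -this

lemma mzg_zero_val : mzg 0 = 1 := by
  rw [mzg]
  rw [tsum_eq_single 0 (fun j hj => by simp [zero_pow (by omega : 2*j ≠ 0)])]
  simp [mzc_zero]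

lemma mzF_zero_val : mzF 0 = 0 := by
  rw [mzF]
  have : ∀ j : ℕ, mzc j / (2*(j:ℝ)+1) * (0:ℝ)^(2*j+1) = 0 := fun j => by simp
  rw [tsum_congr this, tsum_zero]

lemma mzw_zero_val : mzw 0 = 0 := by
  rw [mzw]
  have : ∀ j : ℕ, (2*(j:ℝ)+2) * mzb j * (0:ℝ)^(2*j+1) = 0 := fun j => by simp
  rw [tsum_congr this, tsum_zero]

lemma mzG_zero_val : mzG 0 = 0 := by
  rw [mzG]
  have : ∀ j : ℕ, mzb j * (0:ℝ)^(2*j+2) = 0 := fun j => by simp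
  rw [tsum_congr this, tsum_zero]

lemma mzg_ge_one (hy : |y| < 1) : 1 ≤ mzg y := by
  have h0 : mzc 0 * y^(2*0) ≤ mzg y := by
    refine Summable.le_tsum (summable_g hy) 0 (fun j _ => ?_)
    exact mul_nonneg (mzc_pos j).le ((even_two_mul j).pow_nonneg y)
  simpa [mzc_zero] using h0

lemma mzg_sq (hy : |y| < 1) : mzg y ^ 2 * (1 - y^2) = 1 := by
  have hconst : ∀ z, |z| < 1 → HasDerivAt (fun w => mzg w ^ 2 * (1 - w^2)) 0 z := by
    intro z hz
    have hg := mzg_hasDeriv hz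
    have h2 : HasDerivAt (fun w : ℝ => 1 - w^2) (-(2*z^1)) z := by
      simpa using (hasDerivAt_pow 2 z).const_sub 1
    have full := (hg.pow 2).mul h2
    have hode := mzg_ode hz
    convert full using 1
    rfl
    rfl
    rfl
    simp only [pow_one, Pi.pow_apply]
    linear_combination (-2 * mzg z) * hode
  have := mz_const_of_deriv_zero hconst hy
  simpa [mzg_zero_val] using this

lemma mzg_eq (hy : |y| < 1) : mzg y = 1 / Real.sqrt (1 - y^2) := by
  have h1 := one_sub_sq_pos hy
  have hg1 : (0:ℝ) < mzg y := lt_of_lt_of_le one_pos (mzg_ge_one hy)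
  have hsq : mzg y ^ 2 = 1 / (1 - y^2) := by
    have := mzg_sq hy
    field_simp
    linarith
  calc mzg y = Real.sqrt (mzg y ^ 2) := (Real.sqrt_sq hg1.le).symm
    _ = Real.sqrt (1 / (1 - y^2)) := by rw [hsq]
    _ = 1 / Real.sqrt (1 - y^2) := by
        rw [one_div, one_div, Real.sqrt_inv]

lemma mzF_eq (hy : |y| < 1) : mzF y = Real.arcsin y := by
  have hconst : ∀ z, |z| < 1 → HasDerivAt (fun w => mzF w - Real.arcsin w) 0 z := by
    intro z hz
    rcases abs_lt.1 hz with ⟨hz1, hz2⟩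
    have ha : HasDerivAt Real.arcsin (1 / Real.sqrt (1 - z^2)) z :=
      Real.hasDerivAt_arcsin hz1.ne' hz2.ne
    have := (mzF_hasDeriv hz).sub ha
    convert this using 1
    rfl
    rfl
    rfl
    rw [mzg_eq hz]
    ring
  have := mz_const_of_deriv_zero hconst hy
  simp only [mzF_zero_val, Real.arcsin_zero, sub_zero] at this
  linarith [this]

lemma mzw_ode (hy : |y| < 1) : (1 - y^2) * mzw' y - y * mzw y = 2 := by
  have hW : HasSum (fun j : ℕ => (2*(j:ℝ)+2) * mzb j * y^(2*j+1)) (mzw y) :=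
    (summable_w hy).hasSum
  have hW' : HasSum (fun j : ℕ => (2*(j:ℝ)+2) * mzb j * (((2*j+1 : ℕ):ℝ) * y^(2*j))) (mzw' y) :=
    (summable_w' hy).hasSum
  have h3 : HasSum (fun j : ℕ =>
      (2*(((j+1:ℕ)):ℝ)+2) * mzb (j+1) * (((2*(j+1)+1 : ℕ):ℝ) * y^(2*(j+1)))) (mzw' y - 2) := by
    apply (hasSum_nat_add_iff
      (f := fun j : ℕ => (2*(j:ℝ)+2) * mzb j * (((2*j+1 : ℕ):ℝ) * y^(2*j))) 1).2
    have h0 : (mzw' y - 2) + ∑ i ∈ Finset.range 1,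
        (2*(i:ℝ)+2) * mzb i * (((2*i+1 : ℕ):ℝ) * y^(2*i)) = mzw' y := by
      simp [mzb_zero]
    rw [h0]
    exact hW'
  have key := h3.sub ((hW'.mul_left (y^2)).add (hW.mul_left y))
  have hterm : ∀ j : ℕ,
      (2*(((j+1:ℕ)):ℝ)+2) * mzb (j+1) * (((2*(j+1)+1 : ℕ):ℝ) * y^(2*(j+1))) -
      (y^2 * ((2*(j:ℝ)+2) * mzb j * (((2*j+1 : ℕ):ℝ) * y^(2*j))) +
        y * ((2*(j:ℝ)+2) * mzb j * y^(2*j+1))) = 0 := by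
    intro j
    have r1 := mzb2e (j+1)
    have r2 := mzb2e j
    have r3 := mze_rec j
    have e3 : 2*(j+1) = 2*j+2 := by omega
    rw [e3]
    have hpos : (0:ℝ) < 2*(j:ℝ)+1 := by positivity
    have hmul : (2*(j:ℝ)+1) * ((2*(((j+1:ℕ)):ℝ)+2) * mzb (j+1) * (((2*(j+1)+1 : ℕ):ℝ) * y^(2*j+2)) -
        (y^2 * ((2*(j:ℝ)+2) * mzb j * (((2*j+1 : ℕ):ℝ) * y^(2*j))) +
          y * ((2*(j:ℝ)+2) * mzb j * y^(2*j+1)))) = 0 := by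
      push_cast at r1 r2 r3 ⊢
      linear_combination ((2*(j:ℝ)+1) * y^(2*j+2)) * r1 + (2*y^(2*j+2)) * r3 +
        (-(2*(j:ℝ)+2) * y^(2*j+2)) * r2
    rcases mul_eq_zero.1 hmul with h | h
    · exact absurd h hpos.ne'
    · exact h
  simp only [hterm] at key
  have h0 : HasSum (fun _ : ℕ => (0:ℝ)) 0 := hasSum_zero
  have := h0.unique key
  linear_combination -this

lemma mzw_eq (hy : |y| < 1) : mzw y * Real.sqrt (1 - y^2) = 2 * Real.arcsin y := by
  have hconst : ∀ z, |z| < 1 →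
      HasDerivAt (fun w => mzw w * Real.sqrt (1 - w^2) - 2 * Real.arcsin w) 0 z := by
    intro z hz
    rcases abs_lt.1 hz with ⟨hz1, hz2⟩
    have h1 := one_sub_sq_pos hz
    have hsne : Real.sqrt (1 - z^2) ≠ 0 := (Real.sqrt_pos.2 h1).ne'
    have hinner : HasDerivAt (fun w : ℝ => 1 - w^2) (-(2*z^1)) z := by
      simpa using (hasDerivAt_pow 2 z).const_sub 1
    have hs : HasDerivAt (fun w : ℝ => Real.sqrt (1 - w^2))
        (1 / (2 * Real.sqrt (1 - z^2)) * (-(2*z^1))) z :=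
      (Real.hasDerivAt_sqrt h1.ne').comp z hinner
    have ha : HasDerivAt Real.arcsin (1 / Real.sqrt (1 - z^2)) z :=
      Real.hasDerivAt_arcsin hz1.ne' hz2.ne
    have full := ((mzw_hasDeriv hz).mul hs).sub (ha.const_mul 2)
    have hode := mzw_ode hz
    have hs2 : Real.sqrt (1 - z^2) ^ 2 = 1 - z^2 := Real.sq_sqrt h1.le
    have hval : mzw' z * Real.sqrt (1 - z^2) +
        mzw z * (1 / (2 * Real.sqrt (1 - z^2)) * -(2 * z ^ 1)) -
        2 * (1 / Real.sqrt (1 - z^2)) = 0 := by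
      rw [pow_one]
      have hrw : mzw' z * Real.sqrt (1 - z^2) +
          mzw z * (1 / (2 * Real.sqrt (1 - z^2)) * -(2 * z)) -
          2 * (1 / Real.sqrt (1 - z^2)) =
          (mzw' z * (Real.sqrt (1 - z^2))^2 + mzw z * (-z) - 2) / Real.sqrt (1 - z^2) := by
        field_simp
      rw [hrw, hs2]
      have hnum : mzw' z * (1 - z^2) + mzw z * (-z) - 2 = 0 := by
        linear_combination hode
      rw [hnum, zero_div]
    exact hval ▸ full
  have := mz_const_of_deriv_zero hconst hy
  simp only [mzw_zero_val, Real.arcsin_zero, mul_zero, zero_mul, sub_zero] at this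
  linarith [this]

lemma mzG_eq (hy : |y| < 1) : mzG y = Real.arcsin y ^ 2 := by
  have hconst : ∀ z, |z| < 1 →
      HasDerivAt (fun w => mzG w - Real.arcsin w ^ 2) 0 z := by
    intro z hz
    rcases abs_lt.1 hz with ⟨hz1, hz2⟩
    have h1 := one_sub_sq_pos hz
    have hspos : 0 < Real.sqrt (1 - z^2) := Real.sqrt_pos.2 h1
    have ha : HasDerivAt Real.arcsin (1 / Real.sqrt (1 - z^2)) z :=
      Real.hasDerivAt_arcsin hz1.ne' hz2.ne
    have full := (mzG_hasDeriv hz).sub (ha.pow 2)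
    convert full using 1
    rfl
    rfl
    rfl
    have hw := mzw_eq hz
    field_simp
    linear_combination -hw
  have := mz_const_of_deriv_zero hconst hy
  simp only [mzG_zero_val, Real.arcsin_zero] at this
  norm_num at this
  linarith [this]

/-- The conjectural generating function for Mirzakhani volumes of moduli spaces of
ideal `n`-gons: for `0 < |x| < 1/π`,
`∑_{j≥0} [ ((2j)!/(4^j (j!)² (2j+1))) π^{2j} x^{2j} + ((4^j (j!)²/((j+1)(2j+1)!)) π^{2j} x^{2j+1} ]`
converges to `arcsin(πx)/(πx) + x (arcsin(πx)/(πx))²`. -/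
theorem ngon_generating_function (x : ℝ) (hx0 : 0 < |x|) (hx1 : |x| < 1 / Real.pi) :
    HasSum
      (fun j : ℕ =>
        ((Nat.factorial (2 * j) : ℝ) /
            (4 ^ j * (Nat.factorial j : ℝ) ^ 2 * (2 * (j : ℝ) + 1))) *
          Real.pi ^ (2 * j) * x ^ (2 * j) +
        ((4 ^ j * (Nat.factorial j : ℝ) ^ 2) /
            (((j : ℝ) + 1) * (Nat.factorial (2 * j + 1) : ℝ))) *
          Real.pi ^ (2 * j) * x ^ (2 * j + 1))
      (Real.arcsin (Real.pi * x) / (Real.pi * x) +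
        x * (Real.arcsin (Real.pi * x) / (Real.pi * x)) ^ 2) := by
  have hpi : (0:ℝ) < Real.pi := Real.pi_pos
  have hxne : x ≠ 0 := abs_pos.1 hx0
  set t : ℝ := Real.pi * x with htdef
  have htne : t ≠ 0 := mul_ne_zero hpi.ne' hxne
  have ht : |t| < 1 := by
    rw [htdef, abs_mul, abs_of_pos hpi]
    calc Real.pi * |x| < Real.pi * (1 / Real.pi) := by
          exact mul_lt_mul_of_pos_left hx1 hpi
      _ = 1 := by field_simp
  have hF : HasSum (fun j => mzc j / (2*(j:ℝ)+1) * t^(2*j+1)) (mzF t) := (summable_F ht).hasSum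
  rw [mzF_eq ht] at hF
  have hG : HasSum (fun j => mzb j * t^(2*j+2)) (mzG t) := (summable_G ht).hasSum
  rw [mzG_eq ht] at hG
  have h1 := hF.div_const t
  have h2 := (hG.div_const (t^2)).mul_right x
  have htot := h1.add h2
  convert htot using 1
  · rfl
  · funext j
    have hfac1 : ((Nat.factorial (2*j)) : ℝ) ≠ 0 := by
      exact_mod_cast (Nat.factorial_pos (2*j)).ne'
    have hfac2 : ((Nat.factorial j) : ℝ) ≠ 0 := by
      exact_mod_cast (Nat.factorial_pos j).ne'
    have hfac3 : ((Nat.factorial (2*j+1)) : ℝ) ≠ 0 := by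
      exact_mod_cast (Nat.factorial_pos (2*j+1)).ne'
    have h4 : (4:ℝ)^j ≠ 0 := by positivity
    have h5 : (2*(j:ℝ)+1) ≠ 0 := by positivity
    have h6 : ((j:ℝ)+1) ≠ 0 := by positivity
    have hp1 : t^(2*j+1) = t^(2*j)*t := pow_succ t (2*j)
    have hp2 : t^(2*j+2) = t^(2*j)*t^2 := by rw [pow_add]
    have hp3 : t^(2*j) = Real.pi^(2*j) * x^(2*j) := mul_pow Real.pi x (2*j)
    have hx1p : x^(2*j+1) = x^(2*j)*x := pow_succ x (2*j)
    simp only [mzc, mzb, hp1, hp2, hp3, hx1p]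
    field_simp
  · have : (Real.arcsin t / t) ^ 2 = Real.arcsin t ^ 2 / t ^ 2 := div_pow _ _ 2
    rw [this]
    ring
end
end
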